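/- arXiv:2305.02920 — 9 statements merged into one kernel-verified Lean document; each statement's English description precedes it below -/
import Mathlib

section
/- Every graph G on n ≥ 2 vertices has lettericity at most n − 1. -/
/-- The letter graph of a word `w` with respect to a decoder `D`. -/
def letterGraph {A : Type*} {n : ℕ} (D : Set (A × A)) (w : Fin n → A) :
    SimpleGraph (Fin n) where
  Adj i j := (i < j ∧ (w i, w j) ∈ D) ∨ (j < i ∧ (w j, w i) ∈ D)
  symm := ⟨fun i j h => Or.symm h⟩
  loopless := ⟨fun i h => by rcases h with ⟨h, _⟩ | ⟨h, _⟩ <;> exact lt_irrefl i h⟩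

/-- The lettericity of a graph `G`: the least size `k` of an alphabet such that
`G` is isomorphic to a letter graph over that alphabet. -/
noncomputable def lettericity {V : Type*} [Fintype V] (G : SimpleGraph V) : ℕ :=
  sInf {k | ∃ (n : ℕ) (D : Set (Fin k × Fin k)) (w : Fin n → Fin k),
    Nonempty (G ≃g letterGraph D w)}

theorem lettericity_le_card_sub_one {V : Type*} [Fintype V] (G : SimpleGraph V)
    (h : 2 ≤ Fintype.card V) :
    lettericity G ≤ Fintype.card V - 1 := by
  apply Nat.sInf_le
  set n := Fintype.card V with hn
  set k := n - 1 with hk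
  have hk1 : 1 ≤ k := by omega
  have hnk : n = k + 1 := by omega
  have e : V ≃ Fin n := Fintype.equivFin V
  set w : Fin n → Fin k := fun i => if h : (i : ℕ) < k then ⟨i, h⟩ else ⟨0, by omega⟩
    with hw
  set fst : Fin k → Fin n := fun a => ⟨a, by omega⟩ with hfst
  set snd : Fin k → Fin n := fun b => if (b : ℕ) = 0 then ⟨k, by omega⟩ else ⟨b, by omega⟩
    with hsnd
  set D : Set (Fin k × Fin k) :=
    {p | G.Adj (e.symm (fst p.1)) (e.symm (snd p.2))} with hD
  have key : ∀ i j : Fin n, i < j → ((w i, w j) ∈ D ↔ G.Adj (e.symm i) (e.symm j)) := by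
    intro i j hij
    have hij' : (i : ℕ) < (j : ℕ) := hij
    have hjn : (j : ℕ) < n := j.2
    have hik : (i : ℕ) < k := by omega
    have h1 : fst (w i) = i := by
      simp only [hw, hfst, dif_pos hik]
    have h2 : snd (w j) = j := by
      by_cases hjk : (j : ℕ) < k
      · have hj0 : (j : ℕ) ≠ 0 := by omega
        simp only [hw, hsnd, dif_pos hjk, if_neg hj0]
      · have hjk' : (j : ℕ) = k := by omega
        simp only [hw, hsnd, dif_neg hjk, if_pos rfl]
        exact Fin.ext hjk'.symm
      
    rw [hD]
    simp only [Set.mem_setOf_eq, h1, h2]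
  refine ⟨n, D, w, ⟨⟨e, ?_⟩⟩⟩
  intro u v
  show ((e u < e v ∧ (w (e u), w (e v)) ∈ D) ∨ (e v < e u ∧ (w (e v), w (e u)) ∈ D))
      ↔ G.Adj u v
  rcases lt_trichotomy (e u) (e v) with hlt | heq | hgt
  · rw [key _ _ hlt]
    simp [hlt, not_lt.mpr hlt.le, Equiv.symm_apply_apply]
  · have : u = v := e.injective heq
    subst this
    simp [heq]
  · rw [key _ _ hgt]
    simp [hgt, not_lt.mpr hgt.le, Equiv.symm_apply_apply, G.adj_comm u v]
end

section
/- Suppose G is a graph on n vertices containing an induced subgraph H on 2k vertices such that H is isomorphic to the letter graph of the word w = ℓ₁ℓ₂⋯ℓ_k ℓ_{π(1)}ℓ_{π(2)}⋯ℓ_{π(k)} for some permutation π of {1,…,k} and some decoder on the alphabet {ℓ₁,…,ℓ_k}. Then ℓ(G) ≤ n − k. -/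
/-- The word `ℓ₁ ℓ₂ ⋯ ℓ_k ℓ_{π(1)} ℓ_{π(2)} ⋯ ℓ_{π(k)}` over the alphabet `Fin k`. -/
def prefixWord (k : ℕ) (π : Equiv.Perm (Fin k)) : Fin (2 * k) → Fin k :=
  fun i => if h : (i : ℕ) < k then ⟨i, h⟩
           else π ⟨(i : ℕ) - k, by have := i.2; omega⟩

section Aux

lemma letterGraph_adj {A : Type*} {n : ℕ} (D : Set (A × A)) (w : Fin n → A) (i j : Fin n) :
    (letterGraph D w).Adj i j ↔
      ((i : ℕ) < (j : ℕ) ∧ (w i, w j) ∈ D) ∨ ((j : ℕ) < (i : ℕ) ∧ (w j, w i) ∈ D) := Iff.rfl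

lemma prefixWord_lt {k : ℕ} (π : Equiv.Perm (Fin k)) (i : Fin (2 * k)) (h : (i : ℕ) < k) :
    prefixWord k π i = ⟨i, h⟩ := dif_pos h

lemma prefixWord_ge {k : ℕ} (π : Equiv.Perm (Fin k)) (i : Fin (2 * k)) (h : ¬ (i : ℕ) < k)
    (pf : (i : ℕ) - k < k) : prefixWord k π i = π ⟨(i : ℕ) - k, pf⟩ := dif_neg h

lemma prefixWord_second (k : ℕ) (π : Equiv.Perm (Fin k)) (a : Fin k)
    (pf : k + (π.symm a : ℕ) < 2 * k) :
    prefixWord k π ⟨k + (π.symm a : ℕ), pf⟩ = a := by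
  have h0 : ¬ ((⟨k + (π.symm a : ℕ), pf⟩ : Fin (2 * k)) : ℕ) < k :=
    Nat.not_lt.mpr (Nat.le_add_right _ _)
  have h1 : ((⟨k + (π.symm a : ℕ), pf⟩ : Fin (2 * k)) : ℕ) - k < k := by
    show k + (π.symm a : ℕ) - k < k
    have := (π.symm a).isLt
    omega
  rw [prefixWord_ge π _ h0 h1]
  have h2 : (⟨((⟨k + (π.symm a : ℕ), pf⟩ : Fin (2 * k)) : ℕ) - k, h1⟩ : Fin k) = π.symm a :=
    Fin.ext (show k + (π.symm a : ℕ) - k = (π.symm a : ℕ) by omega)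
  rw [h2, Equiv.apply_symm_apply]

lemma prefixWord_add (k : ℕ) (π : Equiv.Perm (Fin k)) (t : ℕ) (ht : t < k)
    (pf : k + t < 2 * k) : prefixWord k π ⟨k + t, pf⟩ = π ⟨t, ht⟩ := by
  have h0 : ¬ ((⟨k + t, pf⟩ : Fin (2 * k)) : ℕ) < k := Nat.not_lt.mpr (Nat.le_add_right _ _)
  have h1 : ((⟨k + t, pf⟩ : Fin (2 * k)) : ℕ) - k < k := by
    show k + t - k < k; omega
  rw [prefixWord_ge π _ h0 h1]
  exact congrArg π (Fin.ext (show k + t - k = t by omega))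

variable {V : Type*} (k n : ℕ) (v : Fin (2 * k) → V) (rest : Fin (n - 2 * k) → V)
  (π : Equiv.Perm (Fin k)) (h2k : 2 * k ≤ n)

/-- The ordering of all vertices: the `2k` pattern vertices at the two ends,
the remaining vertices in the middle. -/
def pwU : Fin n → V := fun i =>
  if h1 : (i : ℕ) < k then v ⟨i, by omega⟩
  else if h2 : (i : ℕ) < n - k then rest ⟨(i : ℕ) - k, by omega⟩
  else v ⟨(i : ℕ) - (n - 2 * k), by have := i.isLt; omega⟩

/-- The word over an alphabet of size `n - k`. -/
def pwW : Fin n → Fin (n - k) := fun i =>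
  if h : (i : ℕ) < n - k then ⟨i, by omega⟩
  else ⟨(π ⟨(i : ℕ) - (n - k), by have := i.isLt; omega⟩ : Fin k),
    by have := (π ⟨(i : ℕ) - (n - k), by have := i.isLt; omega⟩).isLt; have := i.isLt; omega⟩

/-- The vertex at the first occurrence of a letter. -/
def pwFst : Fin (n - k) → V := fun a =>
  if h : (a : ℕ) < k then v ⟨a, by omega⟩
  else rest ⟨(a : ℕ) - k, by have := a.isLt; omega⟩

/-- The vertex at the last occurrence of a letter. -/
def pwSnd : Fin (n - k) → V := fun a =>
  if h : (a : ℕ) < k then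
    v ⟨k + (π.symm ⟨a, h⟩ : ℕ), by have := (π.symm ⟨a, h⟩).isLt; omega⟩
  else rest ⟨(a : ℕ) - k, by have := a.isLt; omega⟩

lemma pwU_A (i : Fin n) (h1 : (i : ℕ) < k) (pf : (i : ℕ) < 2 * k) :
    pwU k n v rest h2k i = v ⟨(i : ℕ), pf⟩ := dif_pos h1

lemma pwU_B (i : Fin n) (h1 : ¬ (i : ℕ) < k) (h2 : (i : ℕ) < n - k)
    (pf : (i : ℕ) - k < n - 2 * k) :
    pwU k n v rest h2k i = rest ⟨(i : ℕ) - k, pf⟩ := (dif_neg h1).trans (dif_pos h2)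

lemma pwU_C (i : Fin n) (h1 : ¬ (i : ℕ) < k) (h2 : ¬ (i : ℕ) < n - k)
    (pf : (i : ℕ) - (n - 2 * k) < 2 * k) :
    pwU k n v rest h2k i = v ⟨(i : ℕ) - (n - 2 * k), pf⟩ := (dif_neg h1).trans (dif_neg h2)

lemma pwW_lt (i : Fin n) (h : (i : ℕ) < n - k) :
    pwW k n π h2k i = ⟨(i : ℕ), by omega⟩ := dif_pos h

lemma pwW_ge (i : Fin n) (h : ¬ (i : ℕ) < n - k) (pf1 : (i : ℕ) - (n - k) < k)
    (pf2 : ((π ⟨(i : ℕ) - (n - k), pf1⟩ : Fin k) : ℕ) < n - k) :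
    pwW k n π h2k i = ⟨(π ⟨(i : ℕ) - (n - k), pf1⟩ : Fin k), pf2⟩ := dif_neg h

lemma pwFstW_A (i : Fin n) (h1 : (i : ℕ) < k) (pf : (i : ℕ) < 2 * k) :
    pwFst k n v rest h2k (pwW k n π h2k i) = v ⟨(i : ℕ), pf⟩ := by
  rw [pwW_lt k n π h2k i (by have := i.isLt; omega)]
  exact dif_pos h1

lemma pwFstW_B (i : Fin n) (h1 : ¬ (i : ℕ) < k) (h2 : (i : ℕ) < n - k)
    (pf : (i : ℕ) - k < n - 2 * k) :
    pwFst k n v rest h2k (pwW k n π h2k i) = rest ⟨(i : ℕ) - k, pf⟩ := by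
  rw [pwW_lt k n π h2k i h2]
  exact dif_neg h1

lemma pwFstW_C (i : Fin n) (h2 : ¬ (i : ℕ) < n - k) (pf1 : (i : ℕ) - (n - k) < k)
    (pf : ((π ⟨(i : ℕ) - (n - k), pf1⟩ : Fin k) : ℕ) < 2 * k) :
    pwFst k n v rest h2k (pwW k n π h2k i) =
      v ⟨((π ⟨(i : ℕ) - (n - k), pf1⟩ : Fin k) : ℕ), pf⟩ := by
  rw [pwW_ge k n π h2k i h2 pf1 (by have := (π ⟨(i : ℕ) - (n - k), pf1⟩).isLt; omega)]
  exact dif_pos ((π ⟨(i : ℕ) - (n - k), pf1⟩).isLt)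

lemma pwSndW_A (i : Fin n) (h1 : (i : ℕ) < k)
    (pf : k + ((π.symm ⟨(i : ℕ), h1⟩ : Fin k) : ℕ) < 2 * k) :
    pwSnd k n v rest π h2k (pwW k n π h2k i) =
      v ⟨k + ((π.symm ⟨(i : ℕ), h1⟩ : Fin k) : ℕ), pf⟩ := by
  rw [pwW_lt k n π h2k i (by have := i.isLt; omega)]
  exact dif_pos h1

lemma pwSndW_B (i : Fin n) (h1 : ¬ (i : ℕ) < k) (h2 : (i : ℕ) < n - k)
    (pf : (i : ℕ) - k < n - 2 * k) :
    pwSnd k n v rest π h2k (pwW k n π h2k i) = rest ⟨(i : ℕ) - k, pf⟩ := by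
  rw [pwW_lt k n π h2k i h2]
  exact dif_neg h1

lemma pwSndW_C (i : Fin n) (h2 : ¬ (i : ℕ) < n - k)
    (pf : k + ((i : ℕ) - (n - k)) < 2 * k) :
    pwSnd k n v rest π h2k (pwW k n π h2k i) = v ⟨k + ((i : ℕ) - (n - k)), pf⟩ := by
  have hi := i.isLt
  have pf1 : (i : ℕ) - (n - k) < k := by omega
  rw [pwW_ge k n π h2k i h2 pf1 (by have := (π ⟨(i : ℕ) - (n - k), pf1⟩).isLt; omega)]
  have hlt : ((π ⟨(i : ℕ) - (n - k), pf1⟩ : Fin k) : ℕ) < k := (π _).isLt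
  refine Eq.trans (dif_pos hlt) ?_
  refine congrArg v (Fin.ext ?_)
  show k + ((π.symm (⟨((π ⟨(i : ℕ) - (n - k), pf1⟩ : Fin k) : ℕ), hlt⟩ : Fin k) : Fin k) : ℕ)
      = k + ((i : ℕ) - (n - k))
  rw [show (⟨((π ⟨(i : ℕ) - (n - k), pf1⟩ : Fin k) : ℕ), hlt⟩ : Fin k)
      = π ⟨(i : ℕ) - (n - k), pf1⟩ from rfl, Equiv.symm_apply_apply]

end Aux

theorem lettericity_le_of_prefixWord_pattern {V : Type*} [Fintype V]
    (G : SimpleGraph V) (k : ℕ) (v : Fin (2 * k) → V) (hv : Function.Injective v)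
    (π : Equiv.Perm (Fin k)) (D : Set (Fin k × Fin k))
    (hiso : ∀ i j : Fin (2 * k),
      G.Adj (v i) (v j) ↔ (letterGraph D (prefixWord k π)).Adj i j) :
    lettericity G ≤ Fintype.card V - k := by
  classical
  set n := Fintype.card V with hn
  have h2k : 2 * k ≤ n := by
    have h := Fintype.card_le_of_injective v hv
    simpa [← hn] using h
  obtain ⟨rest, hrest_inj, hrest_ne⟩ :
      ∃ rest : Fin (n - 2 * k) → V, Function.Injective rest ∧ ∀ a b, rest a ≠ v b := by
    have hTcard : ((Finset.univ.image v)ᶜ : Finset V).card = n - 2 * k := by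
      rw [Finset.card_compl, Finset.card_image_of_injective _ hv, Finset.card_univ,
        Fintype.card_fin, ← hn]
    refine ⟨fun a => ((Finset.univ.image v)ᶜ.equivFin.symm
      ⟨(a : ℕ), by rw [hTcard]; exact a.isLt⟩ : V), ?_, ?_⟩
    · intro a b hab
      have h1 := ((Finset.univ.image v)ᶜ : Finset V).equivFin.symm.injective (Subtype.ext hab)
      rw [Fin.mk.injEq] at h1
      exact Fin.ext h1
    · intro a b hcon
      have hmem := (((Finset.univ.image v)ᶜ : Finset V).equivFin.symm
        ⟨(a : ℕ), by rw [hTcard]; exact a.isLt⟩).2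
      rw [Finset.mem_compl] at hmem
      exact hmem (Finset.mem_image.mpr ⟨b, Finset.mem_univ b, hcon.symm⟩)
  set D' : Set (Fin (n - k) × Fin (n - k)) :=
    {p | G.Adj (pwFst k n v rest h2k p.1) (pwSnd k n v rest π h2k p.2)} with hD'
  have hiso' : ∀ p q : Fin (2 * k), (p : ℕ) < (q : ℕ) →
      (G.Adj (v p) (v q) ↔ (prefixWord k π p, prefixWord k π q) ∈ D) := by
    intro p q hpq
    rw [hiso, letterGraph_adj]
    have h2 : ¬ (q : ℕ) < (p : ℕ) := by omega
    simp [hpq, h2]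
  have key : ∀ i j : Fin n, (i : ℕ) < (j : ℕ) →
      (G.Adj (pwFst k n v rest h2k (pwW k n π h2k i))
          (pwSnd k n v rest π h2k (pwW k n π h2k j)) ↔
        G.Adj (pwU k n v rest h2k i) (pwU k n v rest h2k j)) := by
    intro i j hij
    have hi := i.isLt
    have hj := j.isLt
    by_cases hjk : (j : ℕ) < k
    · have hik : (i : ℕ) < k := by omega
      have hs := (π.symm ⟨(j : ℕ), hjk⟩).isLt
      rw [pwFstW_A k n v rest π h2k i hik (by omega),
        pwSndW_A k n v rest π h2k j hjk (by omega),
        pwU_A k n v rest h2k i hik (by omega),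
        pwU_A k n v rest h2k j hjk (by omega),
        hiso' ⟨(i : ℕ), by omega⟩ ⟨k + ((π.symm ⟨(j : ℕ), hjk⟩ : Fin k) : ℕ), by omega⟩
          (show (i : ℕ) < k + ((π.symm ⟨(j : ℕ), hjk⟩ : Fin k) : ℕ) by omega),
        hiso' ⟨(i : ℕ), by omega⟩ ⟨(j : ℕ), by omega⟩ hij,
        prefixWord_lt π ⟨(i : ℕ), by omega⟩ hik,
        prefixWord_lt π ⟨(j : ℕ), by omega⟩ hjk,
        prefixWord_second k π ⟨(j : ℕ), hjk⟩ (by omega)]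
    · by_cases hjnk : (j : ℕ) < n - k
      · rw [pwSndW_B k n v rest π h2k j hjk hjnk (by omega),
          pwU_B k n v rest h2k j hjk hjnk (by omega)]
        by_cases hik : (i : ℕ) < k
        · rw [pwFstW_A k n v rest π h2k i hik (by omega),
            pwU_A k n v rest h2k i hik (by omega)]
        · have hink : (i : ℕ) < n - k := by omega
          rw [pwFstW_B k n v rest π h2k i hik hink (by omega),
            pwU_B k n v rest h2k i hik hink (by omega)]
      · have htj : (j : ℕ) - (n - k) < k := by omega
        rw [pwSndW_C k n v rest π h2k j hjnk (by omega),
          pwU_C k n v rest h2k j (by omega) hjnk (by omega),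
          show (⟨(j : ℕ) - (n - 2 * k), by omega⟩ : Fin (2 * k)) =
            ⟨k + ((j : ℕ) - (n - k)), by omega⟩ from
            Fin.ext (show (j : ℕ) - (n - 2 * k) = k + ((j : ℕ) - (n - k)) by omega)]
        by_cases hik : (i : ℕ) < k
        · rw [pwFstW_A k n v rest π h2k i hik (by omega),
            pwU_A k n v rest h2k i hik (by omega)]
        · by_cases hink : (i : ℕ) < n - k
          · rw [pwFstW_B k n v rest π h2k i hik hink (by omega),
              pwU_B k n v rest h2k i hik hink (by omega)]
          · have hti : (i : ℕ) - (n - k) < k := by omega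
            have hpi := (π ⟨(i : ℕ) - (n - k), hti⟩).isLt
            rw [pwFstW_C k n v rest π h2k i hink hti (by omega),
              pwU_C k n v rest h2k i (by omega) hink (by omega),
              show (⟨(i : ℕ) - (n - 2 * k), by omega⟩ : Fin (2 * k)) =
                ⟨k + ((i : ℕ) - (n - k)), by omega⟩ from
                Fin.ext (show (i : ℕ) - (n - 2 * k) = k + ((i : ℕ) - (n - k)) by omega),
              hiso' ⟨((π ⟨(i : ℕ) - (n - k), hti⟩ : Fin k) : ℕ), by omega⟩
                ⟨k + ((j : ℕ) - (n - k)), by omega⟩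
                (show ((π ⟨(i : ℕ) - (n - k), hti⟩ : Fin k) : ℕ) < k + ((j : ℕ) - (n - k))
                  by omega),
              hiso' ⟨k + ((i : ℕ) - (n - k)), by omega⟩
                ⟨k + ((j : ℕ) - (n - k)), by omega⟩
                (show k + ((i : ℕ) - (n - k)) < k + ((j : ℕ) - (n - k)) by omega),
              prefixWord_lt π ⟨((π ⟨(i : ℕ) - (n - k), hti⟩ : Fin k) : ℕ), by omega⟩ hpi,
              prefixWord_add k π ((i : ℕ) - (n - k)) hti (by omega),
              prefixWord_add k π ((j : ℕ) - (n - k)) htj (by omega)]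
  have hbij : Function.Bijective (pwU k n v rest h2k) := by
    refine (Fintype.bijective_iff_injective_and_card _).2 ⟨?_, by simp [hn]⟩
    intro a b hab
    have ha := a.isLt
    have hb := b.isLt
    simp only [pwU] at hab
    split_ifs at hab with h1 h2 h3 h4 h5 h6 h7 h8
    all_goals
      first
      | (exact absurd hab (hrest_ne _ _))
      | (exact absurd hab.symm (hrest_ne _ _))
      | (have h := hv hab; rw [Fin.mk.injEq] at h; exact Fin.ext (by omega))
      | (have h := hrest_inj hab; rw [Fin.mk.injEq] at h; exact Fin.ext (by omega))
  have adj_iff : ∀ i j : Fin n,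
      (letterGraph D' (pwW k n π h2k)).Adj i j ↔
        G.Adj (pwU k n v rest h2k i) (pwU k n v rest h2k j) := by
    intro i j
    rw [letterGraph_adj]
    rcases Nat.lt_trichotomy (i : ℕ) (j : ℕ) with h | h | h
    · have h2 : ¬ (j : ℕ) < (i : ℕ) := by omega
      have hk := key i j h
      simp only [hD', Set.mem_setOf_eq] at *
      constructor
      · rintro (⟨_, hm⟩ | ⟨hc, _⟩)
        · exact hk.1 hm
        · exact absurd hc h2
      · intro hadj
        exact Or.inl ⟨h, hk.2 hadj⟩
    · have hij : i = j := Fin.ext h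
      subst hij
      constructor
      · rintro (⟨hc, _⟩ | ⟨hc, _⟩) <;> omega
      · intro hadj
        exact (G.loopless.irrefl _ hadj).elim
    · have h2 : ¬ (i : ℕ) < (j : ℕ) := by omega
      have hk := key j i h
      simp only [hD', Set.mem_setOf_eq] at *
      constructor
      · rintro (⟨hc, _⟩ | ⟨_, hm⟩)
        · exact absurd hc h2
        · exact (hk.1 hm).symm
      · intro hadj
        exact Or.inr ⟨h, hk.2 hadj.symm⟩
  let e : Fin n ≃ V := Equiv.ofBijective _ hbij
  have : lettericity G = sInf {m | ∃ (n₀ : ℕ) (D₀ : Set (Fin m × Fin m)) (w : Fin n₀ → Fin m),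
      Nonempty (G ≃g letterGraph D₀ w)} := rfl
  rw [this]
  refine Nat.sInf_le ⟨n, D', pwW k n π h2k, ⟨?_⟩⟩
  refine ⟨e.symm, ?_⟩
  intro a b
  have h1 : pwU k n v rest h2k (e.symm a) = a := e.apply_symm_apply a
  have h2 : pwU k n v rest h2k (e.symm b) = b := e.apply_symm_apply b
  rw [adj_iff, h1, h2]
end

section
/- For every k ≥ 1, if a graph G has an induced subgraph on 2k vertices that is either a clique or an independent set, then ℓ(G) ≤ n − k, where n is the number of vertices of G. -/
/-- A set of vertices is an independent set if no two of its vertices are adjacent. -/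
def SimpleGraph.IsIndepSet' {V : Type*} (G : SimpleGraph V) (s : Set V) : Prop :=
  s.Pairwise fun u v => ¬ G.Adj u v

/-- position arithmetic -/
private def pA (k n a : ℕ) : ℕ := if a < k then a else if a < 2*k then n - 1 - (a - k) else a - k

/-- letter arithmetic -/
private def lA (k a : ℕ) : ℕ := if a < k then a else a - k

private lemma pA_lt {k n a : ℕ} (hk : 1 ≤ k) (hn : 2*k ≤ n) (ha : a < n) : pA k n a < n := by
  unfold pA; split_ifs <;> omega

private lemma pA_inj {k n a b : ℕ} (hk : 1 ≤ k) (hn : 2*k ≤ n) (ha : a < n) (hb : b < n)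
    (h : pA k n a = pA k n b) : a = b := by
  unfold pA at h; split_ifs at h <;> omega

private lemma lA_lt {k n a : ℕ} (hk : 1 ≤ k) (hn : 2*k ≤ n) (ha : a < n) : lA k a < n - k := by
  unfold lA; split_ifs <;> omega

private lemma lettericity_le_aux {V : Type*} [Fintype V] (G : SimpleGraph V) (N m : ℕ)
    (e : V ≃ Fin N) (lab : V → Fin m) (D : Set (Fin m × Fin m))
    (h : ∀ u v, G.Adj u v ↔
      ((e u < e v ∧ (lab u, lab v) ∈ D) ∨ (e v < e u ∧ (lab v, lab u) ∈ D))) :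
    lettericity G ≤ m := by
  apply Nat.sInf_le
  refine ⟨N, D, lab ∘ e.symm, ⟨⟨e, fun {u v} => ?_⟩⟩⟩
  show ((e u < e v ∧ ((lab ∘ e.symm) (e u), (lab ∘ e.symm) (e v)) ∈ D) ∨
    (e v < e u ∧ ((lab ∘ e.symm) (e v), (lab ∘ e.symm) (e u)) ∈ D)) ↔ G.Adj u v
  simp only [Function.comp_apply, Equiv.symm_apply_apply]
  exact (h u v).symm

theorem lettericity_le_of_clique_or_indep {V : Type*} [Fintype V]
    (G : SimpleGraph V) (k : ℕ) (hk : 1 ≤ k) (S : Finset V) (hS : S.card = 2 * k)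
    (hCI : G.IsClique (S : Set V) ∨ G.IsIndepSet' (S : Set V)) :
    lettericity G ≤ Fintype.card V - k := by
  classical
  set n := Fintype.card V with hn
  have h2k : 2 * k ≤ n := by rw [← hS]; exact S.card_le_univ
  have e1 : {x // x ∈ S} ≃ Fin (2 * k) := S.equivFin.trans (finCongr hS)
  have e2 : {x // x ∈ Sᶜ} ≃ Fin (n - 2 * k) :=
    Sᶜ.equivFin.trans (finCongr (by rw [Finset.card_compl, hS, hn]))
  set idx : V → ℕ := fun v =>
    if h : v ∈ S then ((e1 ⟨v, h⟩ : Fin (2 * k)) : ℕ)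
    else 2 * k + ((e2 ⟨v, Finset.mem_compl.mpr h⟩ : Fin (n - 2 * k)) : ℕ) with hidx
  have idx_memS : ∀ (v : V) (hv : v ∈ S), idx v = ((e1 ⟨v, hv⟩ : Fin (2 * k)) : ℕ) := by
    intro v hv; simp only [hidx]; rw [dif_pos hv]
  have idx_not : ∀ (v : V) (hv : v ∉ S),
      idx v = 2 * k + ((e2 ⟨v, Finset.mem_compl.mpr hv⟩ : Fin (n - 2 * k)) : ℕ) := by
    intro v hv; simp only [hidx]; rw [dif_neg hv]
  have idx_lt : ∀ v : V, idx v < n := by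
    intro v; by_cases hv : v ∈ S
    · rw [idx_memS v hv]; have := (e1 ⟨v, hv⟩).isLt; omega
    · rw [idx_not v hv]; have := (e2 ⟨v, Finset.mem_compl.mpr hv⟩).isLt; omega
  have mem_iff : ∀ v : V, v ∈ S ↔ idx v < 2 * k := by
    intro v; by_cases hv : v ∈ S
    · simp only [hv, true_iff]; rw [idx_memS v hv]; exact (e1 ⟨v, hv⟩).isLt
    · simp only [hv, false_iff]; rw [idx_not v hv]; omega
  have idx_inj : ∀ u v : V, idx u = idx v → u = v := by
    intro u v h
    by_cases hu : u ∈ S <;> by_cases hv : v ∈ S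
    · rw [idx_memS u hu, idx_memS v hv] at h
      have h2 : e1 ⟨u, hu⟩ = e1 ⟨v, hv⟩ := Fin.ext h
      have h3 := e1.injective h2
      exact congrArg Subtype.val h3
    · exfalso; rw [idx_memS u hu, idx_not v hv] at h
      have := (e1 ⟨u, hu⟩).isLt; omega
    · exfalso; rw [idx_not u hu, idx_memS v hv] at h
      have := (e1 ⟨v, hv⟩).isLt; omega
    · rw [idx_not u hu, idx_not v hv] at h
      have h2 : e2 ⟨u, Finset.mem_compl.mpr hu⟩ = e2 ⟨v, Finset.mem_compl.mpr hv⟩ :=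
        Fin.ext (by omega)
      have h3 := e2.injective h2
      exact congrArg Subtype.val h3
  have symm_eq1 : ∀ (v : V) (hv : v ∈ S) (i : Fin (2 * k)),
      (i : ℕ) = idx v → ((e1.symm i : {x // x ∈ S}) : V) = v := by
    intro v hv i hi
    have h1 : i = e1 ⟨v, hv⟩ := Fin.ext (by rw [hi, idx_memS v hv])
    rw [h1, Equiv.symm_apply_apply]
  have symm_eq2 : ∀ (v : V) (hv : v ∉ S) (j : Fin (n - 2 * k)),
      (j : ℕ) = idx v - 2 * k → ((e2.symm j : {x // x ∈ Sᶜ}) : V) = v := by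
    intro v hv j hj
    have h1 : j = e2 ⟨v, Finset.mem_compl.mpr hv⟩ := by
      apply Fin.ext; rw [hj, idx_not v hv]; omega
    rw [h1, Equiv.symm_apply_apply]
  set lab : V → Fin (n - k) := fun v => ⟨lA k (idx v), lA_lt hk h2k (idx_lt v)⟩ with hlab
  have hlabval : ∀ v : V, ((lab v) : ℕ) = lA k (idx v) := by
    intro v; simp only [hlab]
  set vf : Fin (n - k) → V := fun a =>
    if h : (a : ℕ) < k then ((e1.symm ⟨(a : ℕ), by omega⟩ : {x // x ∈ S}) : V)
    else ((e2.symm ⟨(a : ℕ) - k, by have := a.isLt; omega⟩ : {x // x ∈ Sᶜ}) : V) with hvf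
  set vs : Fin (n - k) → V := fun a =>
    if h : (a : ℕ) < k then ((e1.symm ⟨k + (a : ℕ), by omega⟩ : {x // x ∈ S}) : V)
    else ((e2.symm ⟨(a : ℕ) - k, by have := a.isLt; omega⟩ : {x // x ∈ Sᶜ}) : V) with hvs
  have R1 : ∀ v : V, idx v < k → vf (lab v) = v := by
    intro v hv
    have hvS : v ∈ S := (mem_iff v).mpr (by omega)
    have hl : ((lab v) : ℕ) = idx v := by rw [hlabval]; unfold lA; rw [if_pos hv]
    simp only [hvf]
    rw [dif_pos (show ((lab v) : ℕ) < k by omega)]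
    exact symm_eq1 v hvS _ (by show ((lab v) : ℕ) = idx v; omega)
  have R2 : ∀ v : V, k ≤ idx v → idx v < 2 * k → vs (lab v) = v := by
    intro v hv1 hv2
    have hvS : v ∈ S := (mem_iff v).mpr hv2
    have hl : ((lab v) : ℕ) = idx v - k := by rw [hlabval]; unfold lA; rw [if_neg (by omega)]
    simp only [hvs]
    rw [dif_pos (show ((lab v) : ℕ) < k by omega)]
    exact symm_eq1 v hvS _ (by show k + ((lab v) : ℕ) = idx v; omega)
  have R3 : ∀ v : V, 2 * k ≤ idx v → vf (lab v) = v := by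
    intro v hv
    have hvS : v ∉ S := fun h => by have := (mem_iff v).mp h; omega
    have hl : ((lab v) : ℕ) = idx v - k := by rw [hlabval]; unfold lA; rw [if_neg (by omega)]
    simp only [hvf]
    rw [dif_neg (show ¬ ((lab v) : ℕ) < k by omega)]
    exact symm_eq2 v hvS _ (by show ((lab v) : ℕ) - k = idx v - 2 * k; omega)
  set pos : V → Fin n := fun v => ⟨pA k n (idx v), pA_lt hk h2k (idx_lt v)⟩ with hpos
  have hposval : ∀ v : V, ((pos v) : ℕ) = pA k n (idx v) := by
    intro v; simp only [hpos]
  have pos_inj : Function.Injective pos := by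
    intro u v h
    apply idx_inj u v
    apply pA_inj hk h2k (idx_lt u) (idx_lt v)
    have h2 := congrArg Fin.val h
    rwa [hposval u, hposval v] at h2
  have hb : Function.Bijective pos :=
    (Fintype.bijective_iff_injective_and_card pos).mpr ⟨pos_inj, by simp [hn]⟩
  set e : V ≃ Fin n := Equiv.ofBijective pos hb with heq
  have he : ∀ v : V, e v = pos v := by intro v; rw [heq]; rfl
  set D : Set (Fin (n - k) × Fin (n - k)) :=
    {p | ((p.1 : ℕ) < k ∧ (p.2 : ℕ) < k ∧ G.IsClique (S : Set V)) ∨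
      (¬ ((p.1 : ℕ) < k ∧ (p.2 : ℕ) < k) ∧
        G.Adj (vf p.1) (if (p.2 : ℕ) < k then vs p.2 else vf p.2))} with hD
  have hAdjS : ∀ u v : V, u ∈ S → v ∈ S → u ≠ v →
      (G.Adj u v ↔ G.IsClique (S : Set V)) := by
    intro u v hu hv hne
    constructor
    · intro hadj
      rcases hCI with hC | hI
      · exact hC
      · exact absurd hadj (hI (Finset.mem_coe.mpr hu) (Finset.mem_coe.mpr hv) hne)
    · intro hC
      exact hC (Finset.mem_coe.mpr hu) (Finset.mem_coe.mpr hv) hne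
  have key : ∀ u v : V, pos u < pos v → (G.Adj u v ↔ (lab u, lab v) ∈ D) := by
    intro u v hlt
    have hne : u ≠ v := by rintro rfl; exact lt_irrefl _ hlt
    have hltv : (pos u : ℕ) < (pos v : ℕ) := hlt
    rw [hposval u, hposval v] at hltv
    have hau := idx_lt u
    have hav := idx_lt v
    simp only [hD, Set.mem_setOf_eq]
    by_cases hu2 : idx u < 2 * k <;> by_cases hv2 : idx v < 2 * k
    · -- both in S
      have hu : u ∈ S := (mem_iff u).mpr hu2
      have hv : v ∈ S := (mem_iff v).mpr hv2
      have hlabu : ((lab u) : ℕ) < k := by rw [hlabval]; unfold lA; split_ifs <;> omega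
      have hlabv : ((lab v) : ℕ) < k := by rw [hlabval]; unfold lA; split_ifs <;> omega
      rw [hAdjS u v hu hv hne]
      constructor
      · intro hC; exact Or.inl ⟨hlabu, hlabv, hC⟩
      · rintro (⟨_, _, hC⟩ | ⟨hcon, _⟩)
        · exact hC
        · exact absurd ⟨hlabu, hlabv⟩ hcon
    · -- u ∈ S, v outside
      by_cases h1 : idx u < k
      · have hlabu : ((lab u) : ℕ) < k := by rw [hlabval]; unfold lA; split_ifs <;> omega
        have hlabv : ¬ ((lab v) : ℕ) < k := by rw [hlabval]; unfold lA; split_ifs <;> omega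
        rw [if_neg hlabv, R1 u h1, R3 v (by omega)]
        constructor
        · intro h; exact Or.inr ⟨fun hc => hlabv hc.2, h⟩
        · rintro (⟨_, hc, _⟩ | ⟨_, h⟩)
          · exact absurd hc hlabv
          · exact h
      · exfalso; revert hltv; unfold pA; split_ifs <;> omega
    · -- u outside, v ∈ S
      by_cases h2 : idx v < k
      · exfalso; revert hltv; unfold pA; split_ifs <;> omega
      · have hlabu : ¬ ((lab u) : ℕ) < k := by rw [hlabval]; unfold lA; split_ifs <;> omega
        have hlabv : ((lab v) : ℕ) < k := by rw [hlabval]; unfold lA; split_ifs <;> omega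
        rw [if_pos hlabv, R3 u (by omega), R2 v (by omega) hv2]
        constructor
        · intro h; exact Or.inr ⟨fun hc => hlabu hc.1, h⟩
        · rintro (⟨hc, _, _⟩ | ⟨_, h⟩)
          · exact absurd hc hlabu
          · exact h
    · -- both outside
      have hlabu : ¬ ((lab u) : ℕ) < k := by rw [hlabval]; unfold lA; split_ifs <;> omega
      have hlabv : ¬ ((lab v) : ℕ) < k := by rw [hlabval]; unfold lA; split_ifs <;> omega
      rw [if_neg hlabv, R3 u (by omega), R3 v (by omega)]
      constructor
      · intro h; exact Or.inr ⟨fun hc => hlabu hc.1, h⟩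
      · rintro (⟨hc, _, _⟩ | ⟨_, h⟩)
        · exact absurd hc hlabu
        · exact h
  have hfinal : ∀ u v : V, G.Adj u v ↔
      ((e u < e v ∧ (lab u, lab v) ∈ D) ∨ (e v < e u ∧ (lab v, lab u) ∈ D)) := by
    intro u v
    rw [he u, he v]
    constructor
    · intro hadj
      have hne : pos u ≠ pos v := fun h => (G.ne_of_adj hadj) (pos_inj h)
      rcases lt_or_gt_of_ne hne with h | h
      · exact Or.inl ⟨h, (key u v h).mp hadj⟩
      · exact Or.inr ⟨h, (key v u h).mp hadj.symm⟩
    · rintro (⟨h, hd⟩ | ⟨h, hd⟩)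
      · exact (key u v h).mpr hd
      · exact ((key v u h).mpr hd).symm
  exact lettericity_le_aux G n (n - k) e lab D hfinal
end

section
/- For every k ≥ 1 and every graph G on n ≥ 2(k−1) + 2^{2(k−1)} + 1 vertices, G has an induced subgraph on 2k vertices that is isomorphic to the letter graph of the word ℓ₁ℓ₂⋯ℓ_k ℓ_k⋯ℓ₂ℓ₁ for some decoder on the alphabet {ℓ₁,…,ℓ_k}. -/
/-- The palindromic word `ℓ₁ ℓ₂ ⋯ ℓ_k ℓ_k ⋯ ℓ₂ ℓ₁` over the alphabet `Fin k`. -/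
def palindromeWord (k : ℕ) : Fin (2 * k) → Fin k :=
  fun i => if h : (i : ℕ) < k then ⟨i, h⟩
           else ⟨2 * k - 1 - (i : ℕ), by have := i.2; omega⟩

/-- Auxiliary: snoc of an injective function with a fresh element is injective. -/
lemma snoc_injective_aux {n : ℕ} {α : Type*} {u : Fin n → α} {x : α}
    (hu : Function.Injective u) (hx : ∀ a, u a ≠ x) :
    Function.Injective (Fin.snoc u x : Fin (n + 1) → α) := by
  intro a b h
  induction a using Fin.lastCases with
  | last =>
    induction b using Fin.lastCases with
    | last => rfl
    | cast j =>
      rw [Fin.snoc_last, Fin.snoc_castSucc] at h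
      exact absurd h.symm (hx j)
  | cast i =>
    induction b using Fin.lastCases with
    | last =>
      rw [Fin.snoc_last, Fin.snoc_castSucc] at h
      exact absurd h (hx i)
    | cast j =>
      rw [Fin.snoc_castSucc, Fin.snoc_castSucc] at h
      exact congrArg _ (hu h)

/-- Core combinatorial lemma: greedy twin-pair selection by pigeonhole. -/
lemma exists_twin_pairs {V : Type*} [Fintype V] (G : SimpleGraph V) :
    ∀ j : ℕ, (∀ i < j, 2 * i + 2 ^ (2 * i) + 1 ≤ Fintype.card V) →
    ∃ u v : Fin j → V, Function.Injective u ∧ Function.Injective v ∧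
      (∀ a b, u a ≠ v b) ∧
      ∀ a b : Fin j, a < b →
        ((G.Adj (u a) (u b) ↔ G.Adj (u a) (v b)) ∧
         (G.Adj (v a) (v b) ↔ G.Adj (v a) (u b))) := by
  intro j
  induction j with
  | zero =>
    intro _
    exact ⟨Fin.elim0, Fin.elim0, fun a => a.elim0, fun a => a.elim0,
      fun a => a.elim0, fun a => a.elim0⟩
  | succ j ih =>
    intro hcard
    obtain ⟨u, v, hu, hv, huv, H⟩ := ih (fun i hi => hcard i (by omega))
    classical
    set T : Finset V := Finset.image u Finset.univ ∪ Finset.image v Finset.univ with hT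
    have hTcard : T.card ≤ 2 * j := by
      have h1 := Finset.card_image_le (s := (Finset.univ : Finset (Fin j))) (f := u)
      have h2 := Finset.card_image_le (s := (Finset.univ : Finset (Fin j))) (f := v)
      have h3 : T.card ≤ (Finset.image u Finset.univ).card + (Finset.image v Finset.univ).card :=
        Finset.card_union_le _ _
      simp only [Finset.card_univ, Fintype.card_fin] at h1 h2
      omega
    set S : Finset V := Finset.univ \ T with hS
    have hScard : 2 ^ (2 * j) + 1 ≤ S.card := by
      have hdiff : S.card = Fintype.card V - T.card := by
        rw [hS, Finset.card_sdiff_of_subset (Finset.subset_univ T), Finset.card_univ]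
      have := hcard j (by omega)
      omega
    set f : V → (Fin j → Bool × Bool) :=
      fun x a => (decide (G.Adj (u a) x), decide (G.Adj (v a) x)) with hf
    have hclt : (Finset.univ : Finset (Fin j → Bool × Bool)).card < S.card := by
      have h4 : (Finset.univ : Finset (Fin j → Bool × Bool)).card = 4 ^ j := by
        simp [Finset.card_univ]
      have h5 : (2 : ℕ) ^ (2 * j) = 4 ^ j := by
        rw [pow_mul]; norm_num
      omega
    obtain ⟨x, hx, y, hy, hxy, hfxy⟩ :=
      Finset.exists_ne_map_eq_of_card_lt_of_maps_to hclt (fun a _ => Finset.mem_univ (f a))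
    have hxT : x ∉ T := (Finset.mem_sdiff.mp hx).2
    have hyT : y ∉ T := (Finset.mem_sdiff.mp hy).2
    have hxu : ∀ a, u a ≠ x := by
      intro a hax
      exact hxT (Finset.mem_union_left _ (Finset.mem_image.mpr ⟨a, Finset.mem_univ a, hax⟩))
    have hxv : ∀ a, v a ≠ x := by
      intro a hax
      exact hxT (Finset.mem_union_right _ (Finset.mem_image.mpr ⟨a, Finset.mem_univ a, hax⟩))
    have hyu : ∀ a, u a ≠ y := by
      intro a hay
      exact hyT (Finset.mem_union_left _ (Finset.mem_image.mpr ⟨a, Finset.mem_univ a, hay⟩))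
    have hyv : ∀ a, v a ≠ y := by
      intro a hay
      exact hyT (Finset.mem_union_right _ (Finset.mem_image.mpr ⟨a, Finset.mem_univ a, hay⟩))
    have hAdju : ∀ a, (G.Adj (u a) x ↔ G.Adj (u a) y) := by
      intro a
      have := congrFun hfxy a
      simp only [hf, Prod.mk.injEq] at this
      exact decide_eq_decide.mp this.1
    have hAdjv : ∀ a, (G.Adj (v a) x ↔ G.Adj (v a) y) := by
      intro a
      have := congrFun hfxy a
      simp only [hf, Prod.mk.injEq] at this
      exact decide_eq_decide.mp this.2
    refine ⟨Fin.snoc u x, Fin.snoc v y, snoc_injective_aux hu hxu,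
      snoc_injective_aux hv hyv, ?_, ?_⟩
    · intro a b
      induction a using Fin.lastCases with
      | last =>
        induction b using Fin.lastCases with
        | last => simpa using hxy
        | cast b' => simp only [Fin.snoc_last, Fin.snoc_castSucc]
                     exact fun h => hxv b' h.symm
      | cast a' =>
        induction b using Fin.lastCases with
        | last => simp only [Fin.snoc_last, Fin.snoc_castSucc]
                  exact hyu a'
        | cast b' => simp only [Fin.snoc_castSucc]
                     exact huv a' b'
    · intro a b hab
      induction b using Fin.lastCases with
      | last =>
        induction a using Fin.lastCases with
        | last => exact absurd hab (lt_irrefl _)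
        | cast a' =>
          simp only [Fin.snoc_last, Fin.snoc_castSucc]
          exact ⟨hAdju a', (hAdjv a').symm⟩
      | cast b' =>
        induction a using Fin.lastCases with
        | last =>
          exfalso
          have h1 : (Fin.last j : Fin (j+1)).val = j := rfl
          have h2 := b'.2
          have := hab
          rw [Fin.lt_def] at this
          simp [Fin.coe_castSucc] at this
          omega
        | cast a' =>
          simp only [Fin.snoc_castSucc]
          exact H a' b' (by rwa [Fin.castSucc_lt_castSucc_iff] at hab)

/-- The embedding map of the palindrome positions into `V`. -/
def theMap {V : Type*} (k : ℕ) (u v : Fin k → V) : Fin (2 * k) → V :=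
  fun i => if h : (i : ℕ) < k then u ⟨i, h⟩
           else v ⟨2 * k - 1 - (i : ℕ), by have := i.2; omega⟩

/-- The decoder determined by the chosen twin pairs. -/
def theDecoder {V : Type*} (G : SimpleGraph V) (k : ℕ) (u v : Fin k → V) :
    Set (Fin k × Fin k) :=
  {p | if p.1 < p.2 then G.Adj (u p.1) (u p.2)
       else if p.2 < p.1 then G.Adj (v p.2) (v p.1)
       else G.Adj (u p.1) (v p.1)}

theorem exists_palindrome_letter_subgraph {V : Type*} [Fintype V]
    (G : SimpleGraph V) (k : ℕ) (hk : 1 ≤ k)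
    (hn : 2 * (k - 1) + 2 ^ (2 * (k - 1)) + 1 ≤ Fintype.card V) :
    ∃ v : Fin (2 * k) → V, Function.Injective v ∧
      ∃ D : Set (Fin k × Fin k), ∀ i j : Fin (2 * k),
        G.Adj (v i) (v j) ↔ (letterGraph D (palindromeWord k)).Adj i j := by
  obtain ⟨u, v, hu, hv, huv, H⟩ := exists_twin_pairs G k (by
    intro i hi
    have hmono : (2:ℕ) ^ (2 * i) ≤ 2 ^ (2 * (k - 1)) :=
      Nat.pow_le_pow_right (by norm_num) (by omega)
    omega)
  refine ⟨theMap k u v, ?_, theDecoder G k u v, ?_⟩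
  · intro i j hij
    simp only [theMap] at hij
    by_cases hi : (i : ℕ) < k <;> by_cases hj : (j : ℕ) < k
    · rw [dif_pos hi, dif_pos hj] at hij
      have := hu hij
      rw [Fin.mk.injEq] at this
      exact Fin.ext this
    · rw [dif_pos hi, dif_neg hj] at hij
      exact absurd hij (huv _ _)
    · rw [dif_neg hi, dif_pos hj] at hij
      exact absurd hij.symm (huv _ _)
    · rw [dif_neg hi, dif_neg hj] at hij
      have := hv hij
      rw [Fin.mk.injEq] at this
      have hi2 := i.2
      have hj2 := j.2
      exact Fin.ext (by omega)
  · have key : ∀ i j : Fin (2 * k), (i : ℕ) < (j : ℕ) →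
        (G.Adj (theMap k u v i) (theMap k u v j) ↔
          (palindromeWord k i, palindromeWord k j) ∈ theDecoder G k u v) := by
      intro i j hij
      have hi2 := i.2
      have hj2 := j.2
      simp only [theMap, palindromeWord, theDecoder, Set.mem_setOf_eq]
      by_cases hi : (i : ℕ) < k
      · by_cases hj : (j : ℕ) < k
        · rw [dif_pos hi, dif_pos hj, dif_pos hi, dif_pos hj,
            if_pos (show (⟨(i:ℕ), hi⟩ : Fin k) < ⟨(j:ℕ), hj⟩ from Fin.mk_lt_mk.mpr hij)]
        · rw [dif_pos hi, dif_neg hj, dif_pos hi, dif_neg hj]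
          set b : Fin k := ⟨2 * k - 1 - (j:ℕ), by omega⟩ with hb
          rcases lt_trichotomy (i : ℕ) (b : ℕ) with h | h | h
          · rw [if_pos (show (⟨(i:ℕ), hi⟩ : Fin k) < b from Fin.mk_lt_mk.mpr h)]
            exact ((H ⟨(i:ℕ), hi⟩ b (Fin.mk_lt_mk.mpr h)).1).symm
          · have heq : (⟨(i:ℕ), hi⟩ : Fin k) = b := Fin.ext h
            rw [if_neg (by rw [heq]; exact lt_irrefl b),
              if_neg (by rw [heq]; exact lt_irrefl b), ← heq]
          · rw [if_neg (not_lt.mpr (le_of_lt (Fin.mk_lt_mk.mpr h))),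
              if_pos (show b < (⟨(i:ℕ), hi⟩ : Fin k) from Fin.mk_lt_mk.mpr h)]
            rw [G.adj_comm]
            exact ((H b ⟨(i:ℕ), hi⟩ (Fin.mk_lt_mk.mpr h)).2).symm
      · have hj : ¬ (j : ℕ) < k := by omega
        rw [dif_neg hi, dif_neg hj, dif_neg hi, dif_neg hj]
        have hba : (⟨2 * k - 1 - (j:ℕ), by omega⟩ : Fin k) <
            (⟨2 * k - 1 - (i:ℕ), by omega⟩ : Fin k) := Fin.mk_lt_mk.mpr (by omega)
        rw [if_neg (not_lt.mpr (le_of_lt hba)), if_pos hba]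
        exact G.adj_comm _ _
    intro i j
    show G.Adj (theMap k u v i) (theMap k u v j) ↔
      ((i < j ∧ (palindromeWord k i, palindromeWord k j) ∈ theDecoder G k u v) ∨
       (j < i ∧ (palindromeWord k j, palindromeWord k i) ∈ theDecoder G k u v))
    rcases lt_trichotomy (i : ℕ) (j : ℕ) with h | h | h
    · rw [key i j h]
      constructor
      · intro hd
        exact Or.inl ⟨Fin.lt_def.mpr h, hd⟩
      · rintro (⟨_, hd⟩ | ⟨hlt, _⟩)
        · exact hd
        · exact absurd (Fin.lt_def.mp hlt) (by omega)
    · have : i = j := Fin.ext h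
      subst this
      constructor
      · intro ha
        exact absurd ha (G.irrefl)
      · rintro (⟨hl, _⟩ | ⟨hl, _⟩) <;> exact absurd hl (lt_irrefl _)
    · rw [G.adj_comm, key j i h]
      constructor
      · intro hd
        exact Or.inr ⟨Fin.lt_def.mpr h, hd⟩
      · rintro (⟨hlt, _⟩ | ⟨_, hd⟩)
        · exact absurd (Fin.lt_def.mp hlt) (by omega)
        · exact hd
end

section
/- For every k ≥ 1 and every graph G on n ≥ 2(k−1) + 2^{2(k−1)} + 1 vertices, the lettericity of G satisfies ℓ(G) ≤ n − k. In particular, every n-vertex graph has lettericity at most roughly n − (1/2)log₂ n. -/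
lemma sel {V : Type*} [Fintype V] (G : SimpleGraph V) (k : ℕ)
    (hcard : ∀ j, j < k → 2*j + 2^(2*j) + 1 ≤ Fintype.card V) :
    ∃ u v : Fin k → V, Function.Injective u ∧ Function.Injective v ∧
      (∀ i i', u i ≠ v i') ∧
      ∀ i i' : Fin k, i' < i →
        ((G.Adj (u i) (u i') ↔ G.Adj (v i) (u i')) ∧
         (G.Adj (u i) (v i') ↔ G.Adj (v i) (v i'))) := by
  classical
  induction k with
  | zero =>
    exact ⟨Fin.elim0, Fin.elim0, fun i => i.elim0, fun i => i.elim0,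
      fun i => i.elim0, fun i => i.elim0⟩
  | succ j ih =>
    obtain ⟨u, v, hu, hv, huv, hag⟩ := ih (fun m hm => hcard m (by omega))
    set C : Finset V := Finset.univ.image u ∪ Finset.univ.image v with hC
    have hCcard : C.card ≤ 2*j := by
      calc C.card ≤ (Finset.univ.image u).card + (Finset.univ.image v).card :=
            Finset.card_union_le _ _
        _ ≤ 2*j := by
            have h1 := Finset.card_image_le (s := (Finset.univ : Finset (Fin j))) (f := u)
            have h2 := Finset.card_image_le (s := (Finset.univ : Finset (Fin j))) (f := v)
            simp only [Finset.card_univ, Fintype.card_fin] at h1 h2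
            omega
    have hclt : ((Finset.univ : Finset ((Fin j → Bool) × (Fin j → Bool)))).card
        < (Finset.univ \ C).card := by
      have h1 : ((Finset.univ : Finset ((Fin j → Bool) × (Fin j → Bool)))).card = 2^(2*j) := by
        simp [Finset.card_univ, two_mul, pow_add]
      have h2 : (Finset.univ \ C).card = Fintype.card V - C.card := by
        rw [Finset.card_sdiff_of_subset (Finset.subset_univ _), Finset.card_univ]
      have h3 := hcard j (by omega)
      omega
    set f : V → ((Fin j → Bool) × (Fin j → Bool)) :=
      fun x => (fun i => decide (G.Adj x (u i)), fun i => decide (G.Adj x (v i))) with hf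
    obtain ⟨a, ha, b, hb, hab, hfab⟩ :=
      Finset.exists_ne_map_eq_of_card_lt_of_maps_to hclt (fun x _ => Finset.mem_univ (f x))
    have haC : ∀ i : Fin j, a ≠ u i ∧ a ≠ v i := by
      intro i
      have := Finset.mem_sdiff.mp ha
      constructor <;> intro h <;> apply this.2
      · exact Finset.mem_union_left _ (Finset.mem_image.mpr ⟨i, Finset.mem_univ _, h.symm⟩)
      · exact Finset.mem_union_right _ (Finset.mem_image.mpr ⟨i, Finset.mem_univ _, h.symm⟩)
    have hbC : ∀ i : Fin j, b ≠ u i ∧ b ≠ v i := by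
      intro i
      have := Finset.mem_sdiff.mp hb
      constructor <;> intro h <;> apply this.2
      · exact Finset.mem_union_left _ (Finset.mem_image.mpr ⟨i, Finset.mem_univ _, h.symm⟩)
      · exact Finset.mem_union_right _ (Finset.mem_image.mpr ⟨i, Finset.mem_univ _, h.symm⟩)
    have hfst : ∀ i : Fin j, (G.Adj a (u i) ↔ G.Adj b (u i)) := by
      intro i
      have := congrFun (congrArg Prod.fst hfab) i
      simpa using decide_eq_decide.mp this
    have hsnd : ∀ i : Fin j, (G.Adj a (v i) ↔ G.Adj b (v i)) := by
      intro i
      have := congrFun (congrArg Prod.snd hfab) i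
      simpa using decide_eq_decide.mp this
    refine ⟨Fin.snoc u a, Fin.snoc v b, ?_, ?_, ?_, ?_⟩
    · intro i i' h
      induction i using Fin.lastCases with
      | last =>
        induction i' using Fin.lastCases with
        | last => rfl
        | cast i' =>
          rw [Fin.snoc_last, Fin.snoc_castSucc] at h
          exact absurd h (haC i').1
      | cast i₀ =>
        induction i' using Fin.lastCases with
        | last =>
          rw [Fin.snoc_last, Fin.snoc_castSucc] at h
          exact absurd h.symm (haC i₀).1
        | cast i' =>
          rw [Fin.snoc_castSucc, Fin.snoc_castSucc] at h
          exact congrArg Fin.castSucc (hu h)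
    · intro i i' h
      induction i using Fin.lastCases with
      | last =>
        induction i' using Fin.lastCases with
        | last => rfl
        | cast i' =>
          rw [Fin.snoc_last, Fin.snoc_castSucc] at h
          exact absurd h (hbC i').2
      | cast i₀ =>
        induction i' using Fin.lastCases with
        | last =>
          rw [Fin.snoc_last, Fin.snoc_castSucc] at h
          exact absurd h.symm (hbC i₀).2
        | cast i' =>
          rw [Fin.snoc_castSucc, Fin.snoc_castSucc] at h
          exact congrArg Fin.castSucc (hv h)
    · intro i i' h
      induction i using Fin.lastCases with
      | last =>
        induction i' using Fin.lastCases with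
        | last => rw [Fin.snoc_last, Fin.snoc_last] at h; exact hab h
        | cast i' =>
          rw [Fin.snoc_last, Fin.snoc_castSucc] at h
          exact (haC i').2 h
      | cast i₀ =>
        induction i' using Fin.lastCases with
        | last =>
          rw [Fin.snoc_last, Fin.snoc_castSucc] at h
          exact (hbC i₀).1 h.symm
        | cast i' =>
          rw [Fin.snoc_castSucc, Fin.snoc_castSucc] at h
          exact huv i₀ i' h
    · intro i i' hlt
      induction i using Fin.lastCases with
      | last =>
        induction i' using Fin.lastCases with
        | last => exact absurd hlt (lt_irrefl _)
        | cast i' =>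
          simp only [Fin.snoc_last, Fin.snoc_castSucc]
          exact ⟨hfst i', hsnd i'⟩
      | cast i₀ =>
        induction i' using Fin.lastCases with
        | last =>
          exfalso
          have h1 : (Fin.last j : Fin (j+1)).val = j := rfl
          have h2 : ((i₀.castSucc : Fin (j+1))).val < j := i₀.isLt
          have := Fin.lt_def.mp hlt
          omega
        | cast i' =>
          simp only [Fin.snoc_castSucc]
          exact hag i₀ i' (Fin.castSucc_lt_castSucc_iff.mp hlt)



private def sig {V : Type*} {n k : ℕ} (u v : Fin k → V) (mid : Fin (n - 2*k) → V)
    (p : Fin n) : V :=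
  if h1 : (p : ℕ) < k then u ⟨p, h1⟩
  else if h2 : (p : ℕ) < n - k then mid ⟨(p:ℕ) - k, by omega⟩
  else v ⟨n - 1 - (p:ℕ), by have := p.2; omega⟩

private lemma sig_u {V : Type*} {n k : ℕ} (u v : Fin k → V) (mid : Fin (n - 2*k) → V)
    (p : Fin n) (h : (p:ℕ) < k) : sig u v mid p = u ⟨p, h⟩ := dif_pos h

private lemma sig_m {V : Type*} {n k : ℕ} (u v : Fin k → V) (mid : Fin (n - 2*k) → V)
    (p : Fin n) (h1 : ¬ (p:ℕ) < k) (h2 : (p:ℕ) < n - k) (hb : (p:ℕ) - k < n - 2*k) :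
    sig u v mid p = mid ⟨(p:ℕ) - k, hb⟩ := by
  unfold sig; rw [dif_neg h1, dif_pos h2]

private lemma sig_v {V : Type*} {n k : ℕ} (u v : Fin k → V) (mid : Fin (n - 2*k) → V)
    (p : Fin n) (h1 : ¬ (p:ℕ) < k) (h2 : ¬ (p:ℕ) < n - k) (hb : n - 1 - (p:ℕ) < k) :
    sig u v mid p = v ⟨n - 1 - (p:ℕ), hb⟩ := by
  unfold sig; rw [dif_neg h1, dif_neg h2]

private def wrd {n k : ℕ} (h2k : 2*k ≤ n) (p : Fin n) : Fin (n - k) :=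
  if h : (p:ℕ) < n - k then ⟨p, h⟩ else ⟨n - 1 - (p:ℕ), by have := p.2; omega⟩

private def rep1 {V : Type*} {n : ℕ} (k : ℕ) (s : Fin n → V) (a : Fin (n - k)) : V :=
  s ⟨a, by have := a.2; omega⟩

private def rep2 {V : Type*} {n k : ℕ} (v : Fin k → V) (s : Fin n → V) (a : Fin (n - k)) : V :=
  if h : (a:ℕ) < k then v ⟨a, h⟩ else s ⟨a, by have := a.2; omega⟩

private lemma key {V : Type*} [Fintype V] (G : SimpleGraph V) (k : ℕ) (hk : 1 ≤ k)
    (h2k : 2*k ≤ Fintype.card V)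
    (u v : Fin k → V) (hu : Function.Injective u) (hv : Function.Injective v)
    (huv : ∀ i i', u i ≠ v i')
    (hag : ∀ i i' : Fin k, i' < i →
      ((G.Adj (u i) (u i') ↔ G.Adj (v i) (u i')) ∧
       (G.Adj (u i) (v i') ↔ G.Adj (v i) (v i')))) :
    lettericity G ≤ Fintype.card V - k := by
  classical
  set n := Fintype.card V with hn
  set C : Finset V := Finset.univ.image u ∪ Finset.univ.image v with hC
  have hCcard : C.card = 2*k := by
    rw [hC, Finset.card_union_of_disjoint, Finset.card_image_of_injective _ hu,
      Finset.card_image_of_injective _ hv]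
    · simp [Finset.card_univ]; ring
    · rw [Finset.disjoint_left]
      rintro x hx hx'
      obtain ⟨i, -, rfl⟩ := Finset.mem_image.mp hx
      obtain ⟨i', -, h⟩ := Finset.mem_image.mp hx'
      exact huv i i' h.symm
  have hM : (Finset.univ \ C).card = n - 2*k := by
    rw [Finset.card_sdiff_of_subset (Finset.subset_univ _), Finset.card_univ, hCcard]
  set mid : Fin (n - 2*k) → V := fun i => ((Finset.equivFinOfCardEq hM).symm i : V) with hmid
  have hmidinj : Function.Injective mid := by
    intro i i' h
    exact (Finset.equivFinOfCardEq hM).symm.injective (Subtype.ext h)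
  have hmidmem : ∀ i, mid i ∉ C := by
    intro i
    have := ((Finset.equivFinOfCardEq hM).symm i).2
    exact (Finset.mem_sdiff.mp this).2
  have hmu : ∀ i a, mid i ≠ u a := fun i a h =>
    hmidmem i (Finset.mem_union_left _ (Finset.mem_image.mpr ⟨a, Finset.mem_univ _, h.symm⟩))
  have hmv : ∀ i a, mid i ≠ v a := fun i a h =>
    hmidmem i (Finset.mem_union_right _ (Finset.mem_image.mpr ⟨a, Finset.mem_univ _, h.symm⟩))
  set s : Fin n → V := sig u v mid with hs
  -- injectivity
  have hinj : Function.Injective s := by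
    intro p q h
    have hpn := p.2; have hqn := q.2
    apply Fin.ext
    rw [hs] at h
    by_cases hp1 : (p:ℕ) < k <;> by_cases hq1 : (q:ℕ) < k
    · rw [sig_u u v mid p hp1, sig_u u v mid q hq1] at h
      have := congrArg Fin.val (hu h); simp only at this; exact this
    · by_cases hq2 : (q:ℕ) < n - k
      · rw [sig_u u v mid p hp1, sig_m u v mid q hq1 hq2 (by omega)] at h
        exact absurd h.symm (hmu _ _)
      · rw [sig_u u v mid p hp1, sig_v u v mid q hq1 hq2 (by omega)] at h
        exact absurd h (huv _ _)
    · by_cases hp2 : (p:ℕ) < n - k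
      · rw [sig_u u v mid q hq1, sig_m u v mid p hp1 hp2 (by omega)] at h
        exact absurd h (hmu _ _)
      · rw [sig_u u v mid q hq1, sig_v u v mid p hp1 hp2 (by omega)] at h
        exact absurd h.symm (huv _ _)
    · by_cases hp2 : (p:ℕ) < n - k <;> by_cases hq2 : (q:ℕ) < n - k
      · rw [sig_m u v mid p hp1 hp2 (by omega), sig_m u v mid q hq1 hq2 (by omega)] at h
        have := congrArg Fin.val (hmidinj h); simp only at this; omega
      · rw [sig_m u v mid p hp1 hp2 (by omega), sig_v u v mid q hq1 hq2 (by omega)] at h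
        exact absurd h (hmv _ _)
      · rw [sig_m u v mid q hq1 hq2 (by omega), sig_v u v mid p hp1 hp2 (by omega)] at h
        exact absurd h.symm (hmv _ _)
      · rw [sig_v u v mid p hp1 hp2 (by omega), sig_v u v mid q hq1 hq2 (by omega)] at h
        have := congrArg Fin.val (hv h); simp only at this; omega
  have hbij : Function.Bijective s :=
    (Fintype.bijective_iff_injective_and_card s).mpr ⟨hinj, by simp [hn]⟩
  set D : Set (Fin (n-k) × Fin (n-k)) := {x | G.Adj (rep1 k s x.1) (rep2 v s x.2)} with hD
  have hmemD : ∀ a b : Fin (n-k), ((a, b) ∈ D) = G.Adj (rep1 k s a) (rep2 v s b) := by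
    intro a b; rfl
  -- main adjacency lemma
  have main : ∀ p q : Fin n, (p:ℕ) < (q:ℕ) →
      (G.Adj (s p) (s q) ↔ (wrd h2k p, wrd h2k q) ∈ D) := by
    intro p q hpq
    have hpn := p.2; have hqn := q.2
    rw [hmemD]
    by_cases hq : (q:ℕ) < k
    · -- p < q < k
      have hp : (p:ℕ) < k := by omega
      have hw1 : rep1 k s (wrd h2k p) = s p := by
        unfold rep1 wrd
        rw [dif_pos (show (p:ℕ) < n - k by omega)]
      have hw2 : rep2 v s (wrd h2k q) = v ⟨q, hq⟩ := by
        unfold rep2 wrd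
        rw [dif_pos (show (q:ℕ) < n - k by omega)]
        exact dif_pos hq
      rw [hw1, hw2, hs, sig_u u v mid p hp, sig_u u v mid q hq]
      have := (hag ⟨q, hq⟩ ⟨p, hp⟩ (by rw [Fin.lt_def]; exact hpq)).1
      rw [G.adj_comm (u ⟨q,hq⟩) (u ⟨p,hp⟩), G.adj_comm (v ⟨q,hq⟩) (u ⟨p,hp⟩)] at this
      exact this
    · by_cases hp2 : (p:ℕ) < n - k
      · -- both reps are s
        have hw1 : rep1 k s (wrd h2k p) = s p := by
          unfold rep1 wrd; rw [dif_pos hp2]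
        have hw2 : rep2 v s (wrd h2k q) = s q := by
          unfold rep2 wrd
          by_cases hq2 : (q:ℕ) < n - k
          · rw [dif_pos hq2, dif_neg (show ¬ ((⟨(q:ℕ), hq2⟩ : Fin (n-k)):ℕ) < k from hq)]
          · rw [dif_neg hq2, dif_pos (show ((⟨n-1-(q:ℕ), _⟩ : Fin (n-k)):ℕ) < k by
              simp only; omega)]
            rw [hs, sig_v u v mid q hq hq2 (by omega)]
        rw [hw1, hw2]
      · -- n - k ≤ p < q
        have hq2 : ¬ (q:ℕ) < n - k := by omega
        have hbk : n - 1 - (p:ℕ) < k := by omega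
        have hak : n - 1 - (q:ℕ) < k := by omega
        have hw1 : rep1 k s (wrd h2k p) = u ⟨n - 1 - (p:ℕ), hbk⟩ := by
          unfold rep1 wrd
          rw [dif_neg hp2, hs]
          exact sig_u u v mid _ (by simpa using hbk)
        have hw2 : rep2 v s (wrd h2k q) = v ⟨n - 1 - (q:ℕ), hak⟩ := by
          unfold rep2 wrd
          rw [dif_neg hq2]
          exact dif_pos (by simpa using hak)
        have hsp : s p = v ⟨n - 1 - (p:ℕ), hbk⟩ := by
          rw [hs]; exact sig_v u v mid p (by omega) hp2 hbk
        have hsq : s q = v ⟨n - 1 - (q:ℕ), hak⟩ := by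
          rw [hs]; exact sig_v u v mid q hq hq2 hak
        rw [hw1, hw2, hsp, hsq]
        have := (hag ⟨n-1-(p:ℕ), hbk⟩ ⟨n-1-(q:ℕ), hak⟩ (by rw [Fin.lt_def]; simp; omega)).2
        exact this.symm
  -- the isomorphism
  have hadj : ∀ p q : Fin n, (letterGraph D (wrd h2k)).Adj p q ↔
      (((p:ℕ) < (q:ℕ) ∧ (wrd h2k p, wrd h2k q) ∈ D) ∨
       ((q:ℕ) < (p:ℕ) ∧ (wrd h2k q, wrd h2k p) ∈ D)) := by
    intro p q
    constructor
    · rintro (⟨h1, h2⟩ | ⟨h1, h2⟩)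
      · exact Or.inl ⟨Fin.lt_def.mp h1, h2⟩
      · exact Or.inr ⟨Fin.lt_def.mp h1, h2⟩
    · rintro (⟨h1, h2⟩ | ⟨h1, h2⟩)
      · exact Or.inl ⟨Fin.lt_def.mpr h1, h2⟩
      · exact Or.inr ⟨Fin.lt_def.mpr h1, h2⟩
  have iso : letterGraph D (wrd h2k) ≃g G := by
    refine ⟨Equiv.ofBijective s hbij, ?_⟩
    intro p q
    simp only [Equiv.ofBijective_apply]
    rw [hadj]
    constructor
    · intro hGadj
      rcases lt_trichotomy (p:ℕ) (q:ℕ) with h | h | h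
      · exact Or.inl ⟨h, (main p q h).mp hGadj⟩
      · exfalso
        have : p = q := Fin.ext h
        subst this
        exact G.irrefl hGadj
      · exact Or.inr ⟨h, (main q p h).mp hGadj.symm⟩
    · rintro (⟨h1, h2⟩ | ⟨h1, h2⟩)
      · exact (main p q h1).mpr h2
      · exact ((main q p h1).mpr h2).symm
  apply Nat.sInf_le
  exact ⟨n, D, wrd h2k, ⟨iso.symm⟩⟩


theorem lettericity_le_card_sub {V : Type*} [Fintype V]
    (G : SimpleGraph V) (k : ℕ) (hk : 1 ≤ k)
    (hn : 2 * (k - 1) + 2 ^ (2 * (k - 1)) + 1 ≤ Fintype.card V) :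
    lettericity G ≤ Fintype.card V - k := by
  have hpow : (1:ℕ) ≤ 2^(2*(k-1)) := Nat.one_le_two_pow
  have h2k : 2*k ≤ Fintype.card V := by omega
  have hcard : ∀ j, j < k → 2*j + 2^(2*j) + 1 ≤ Fintype.card V := by
    intro j hj
    have h1 : (2:ℕ)^(2*j) ≤ 2^(2*(k-1)) := Nat.pow_le_pow_right (by norm_num) (by omega)
    omega
  obtain ⟨u, v, hu, hv, huv, hag⟩ := sel G k hcard
  exact key G k hk h2k u v hu hv huv hag
end

section
/- The number of labeled graphs G on vertex set {1,…,n} for which there exist three distinct vertices x, y, z such that every vertex v ∉ {x,y,z} agrees on {x,y} or agrees on {y,z} is at most n(n−1)(n−2) · (3/4)^{n−3} · 2^{C(n,2)}. Consequently, the proportion of labeled n-vertex graphs admitting such a triple tends to 0 as n → ∞. -/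
open Filter

/-- `v` agrees on the pair `{u₁, u₂}`: it is adjacent to both or to neither. -/
def agreesOn {V : Type*} (G : SimpleGraph V) (v u₁ u₂ : V) : Prop :=
  G.Adj v u₁ ↔ G.Adj v u₂

/-- `G` admits a triple of distinct vertices on which every other vertex agrees
on `{x,y}` or on `{y,z}`. -/
def HasGoodTriple {n : ℕ} (G : SimpleGraph (Fin n)) : Prop :=
  ∃ x y z : Fin n, x ≠ y ∧ y ≠ z ∧ x ≠ z ∧
    ∀ v : Fin n, v ≠ x → v ≠ y → v ≠ z → (agreesOn G v x y ∨ agreesOn G v y z)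

open scoped Classical

attribute [local instance] Classical.propDecidable

namespace GoodTripleAux

/-- Graphs on `Fin n` inject into Boolean functions on non-diagonal `Sym2`s. -/
noncomputable def toFun {n : ℕ} (G : SimpleGraph (Fin n)) :
    {e : Sym2 (Fin n) // ¬ e.IsDiag} → Bool :=
  fun e => e.val.lift ⟨fun a b => decide (G.Adj a b), fun a b => by
    simp [G.adj_comm]⟩

lemma toFun_injective {n : ℕ} : Function.Injective (toFun (n := n)) := by
  intro G G' h
  ext a b
  by_cases hab : a = b
  · subst hab; simp
  · have hd : ¬ (s(a, b)).IsDiag := by simpa using hab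
    have := congrFun h ⟨s(a, b), hd⟩
    simp only [toFun, Sym2.lift_mk] at this
    simpa using this

lemma card_simpleGraph_le (n : ℕ) :
    Fintype.card (SimpleGraph (Fin n)) ≤ 2 ^ n.choose 2 := by
  have := Fintype.card_le_of_injective _ (toFun_injective (n := n))
  rwa [Fintype.card_fun, Fintype.card_bool, Sym2.card_subtype_not_diag,
    Fintype.card_fin] at this

section Triple

variable {n : ℕ} (x y z : Fin n)

/-- The per-triple condition. -/
def Cond (G : SimpleGraph (Fin n)) : Prop :=
  ∀ v : Fin n, v ≠ x → v ≠ y → v ≠ z → (agreesOn G v x y ∨ agreesOn G v y z)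

/-- Vertices outside the triple. -/
def Outside : Type := {v : Fin n // v ≠ x ∧ v ≠ y ∧ v ≠ z}

noncomputable instance : Fintype (Outside x y z) := by
  unfold Outside; infer_instance

/-- Allowed adjacency patterns. -/
def Pat : Type := {p : Bool × Bool × Bool // p.1 = p.2.1 ∨ p.2.1 = p.2.2}

instance : Fintype (Pat) := by unfold Pat; infer_instance

lemma card_pat : Fintype.card Pat = 6 := by
  rw [Fintype.card_eq_nat_card]
  unfold Pat
  rw [Nat.card_eq_fintype_card, Fintype.card_subtype]
  decide

def tval (x y : Fin n) (p : Bool × Bool × Bool) (t : Fin n) : Bool :=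
  if t = x then p.1 else if t = y then p.2.1 else p.2.2

/-- Replace the adjacency pattern of every outside vertex towards `{x,y,z}`
by the prescribed one. -/
def modify (G : SimpleGraph (Fin n)) (g : Outside x y z → Bool × Bool × Bool) :
    SimpleGraph (Fin n) where
  Adj a b :=
    if ha : a ≠ x ∧ a ≠ y ∧ a ≠ z then
      if hb : b ≠ x ∧ b ≠ y ∧ b ≠ z then G.Adj a b
      else tval x y (g ⟨a, ha⟩) b = true
    else if hb : b ≠ x ∧ b ≠ y ∧ b ≠ z then tval x y (g ⟨b, hb⟩) a = true
    else G.Adj a b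
  symm := by
    constructor
    intro a b h
    by_cases ha : a ≠ x ∧ a ≠ y ∧ a ≠ z <;> by_cases hb : b ≠ x ∧ b ≠ y ∧ b ≠ z <;>
      simp_all [G.adj_comm]
  loopless := by
    constructor
    intro a h
    by_cases ha : a ≠ x ∧ a ≠ y ∧ a ≠ z <;> simp_all

lemma modify_adj (G : SimpleGraph (Fin n)) (g : Outside x y z → Bool × Bool × Bool)
    (a b : Fin n) :
    (modify x y z G g).Adj a b ↔
    if ha : a ≠ x ∧ a ≠ y ∧ a ≠ z then
      if hb : b ≠ x ∧ b ≠ y ∧ b ≠ z then G.Adj a b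
      else tval x y (g ⟨a, ha⟩) b = true
    else if hb : b ≠ x ∧ b ≠ y ∧ b ≠ z then tval x y (g ⟨b, hb⟩) a = true
    else G.Adj a b := Iff.rfl

/-- The adjacency pattern of `v` towards `x, y, z`. -/
noncomputable def pat (G : SimpleGraph (Fin n)) (v : Fin n) : Bool × Bool × Bool :=
  (decide (G.Adj v x), decide (G.Adj v y), decide (G.Adj v z))

/-- The key injection. -/
noncomputable def Ψ :
    ({G : SimpleGraph (Fin n) // Cond x y z G} × (Outside x y z → Bool × Bool × Bool)) →
      (SimpleGraph (Fin n) × (Outside x y z → Pat)) :=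
  fun P =>
    (modify x y z P.1.1 P.2, fun v =>
      ⟨pat x y z P.1.1 v.1, by
        rcases P.1.2 v.1 v.2.1 v.2.2.1 v.2.2.2 with h | h
        · have h' : P.1.1.Adj v.1 x ↔ P.1.1.Adj v.1 y := h
          exact Or.inl (by simp only [pat]; exact decide_eq_decide.mpr h')
        · have h' : P.1.1.Adj v.1 y ↔ P.1.1.Adj v.1 z := h
          exact Or.inr (by simp only [pat]; exact decide_eq_decide.mpr h')⟩)

variable (hxy : x ≠ y) (hyz : y ≠ z) (hxz : x ≠ z)

include hxy hyz hxz in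
lemma Ψ_injective : Function.Injective (Ψ x y z) := by
  rintro ⟨⟨G, hG⟩, g⟩ ⟨⟨G', hG'⟩, g'⟩ h
  have h1 : modify x y z G g = modify x y z G' g' := congrArg Prod.fst h
  have h2 := congrArg Prod.snd h
  have h1' : ∀ a b, (modify x y z G g).Adj a b ↔ (modify x y z G' g').Adj a b := by
    intro a b; rw [h1]
  have h2' : ∀ v : Outside x y z, pat x y z G v.1 = pat x y z G' v.1 := by
    intro v
    exact congrArg Subtype.val (congrFun h2 v)
  have hpat : ∀ (v : Fin n), v ≠ x → v ≠ y → v ≠ z →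
      ((G.Adj v x ↔ G'.Adj v x) ∧ (G.Adj v y ↔ G'.Adj v y) ∧ (G.Adj v z ↔ G'.Adj v z)) := by
    intro v h1 h2 h3
    have := h2' ⟨v, h1, h2, h3⟩
    simp only [pat, Prod.mk.injEq] at this
    exact ⟨decide_eq_decide.mp this.1, decide_eq_decide.mp this.2.1,
      decide_eq_decide.mp this.2.2⟩
  have hGG : G = G' := by
    ext a b
    by_cases ha : a ≠ x ∧ a ≠ y ∧ a ≠ z
    · by_cases hb : b ≠ x ∧ b ≠ y ∧ b ≠ z
      · have := h1' a b
        rw [modify_adj, modify_adj, dif_pos ha, dif_pos ha, dif_pos hb, dif_pos hb] at this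
        exact this
      · push_neg at hb
        rcases not_and_or.mp (by tauto : ¬(b ≠ x ∧ b ≠ y ∧ b ≠ z)) with hbx | hrest
        · have hbx : b = x := not_not.mp hbx
          subst hbx; exact (hpat a ha.1 ha.2.1 ha.2.2).1
        · rcases not_and_or.mp hrest with hby | hbz
          · have hby : b = y := not_not.mp hby
            subst hby; exact (hpat a ha.1 ha.2.1 ha.2.2).2.1
          · have hbz : b = z := not_not.mp hbz
            subst hbz; exact (hpat a ha.1 ha.2.1 ha.2.2).2.2
    · by_cases hb : b ≠ x ∧ b ≠ y ∧ b ≠ z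
      · rw [G.adj_comm, G'.adj_comm]
        rcases not_and_or.mp ha with hax | hrest
        · have hax : a = x := not_not.mp hax
          subst hax; exact (hpat b hb.1 hb.2.1 hb.2.2).1
        · rcases not_and_or.mp hrest with hay | haz
          · have hay : a = y := not_not.mp hay
            subst hay; exact (hpat b hb.1 hb.2.1 hb.2.2).2.1
          · have haz : a = z := not_not.mp haz
            subst haz; exact (hpat b hb.1 hb.2.1 hb.2.2).2.2
      · have := h1' a b
        rw [modify_adj, modify_adj, dif_neg ha, dif_neg ha, dif_neg hb, dif_neg hb] at this
        exact this
  have hgg : g = g' := by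
    funext v
    obtain ⟨v, hv⟩ := v
    have key : ∀ t : Fin n, ¬(t ≠ x ∧ t ≠ y ∧ t ≠ z) →
        tval x y (g ⟨v, hv⟩) t = tval x y (g' ⟨v, hv⟩) t := by
      intro t ht
      have := h1' v t
      rw [modify_adj, modify_adj, dif_pos hv, dif_pos hv, dif_neg ht, dif_neg ht] at this
      exact Bool.coe_iff_coe.mp this
    have hx := key x (by simp)
    have hy := key y (by simp)
    have hz := key z (by simp)
    simp only [tval, if_pos rfl] at hx
    simp [tval, Ne.symm hxy] at hy
    simp [tval, Ne.symm hxz, Ne.symm hyz] at hz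
    exact Prod.ext hx (Prod.ext hy hz)
  exact Prod.ext (Subtype.ext hGG) hgg

include hxy hyz hxz in
lemma card_outside : Fintype.card (Outside x y z) = n - 3 := by
  have h1 : Fintype.card {v : Fin n // v = x ∨ v = y ∨ v = z} = 3 := by
    rw [Fintype.card_subtype]
    have he : Finset.univ.filter (fun v : Fin n => v = x ∨ v = y ∨ v = z)
        = ({x, y, z} : Finset (Fin n)) := by
      ext v; simp
    rw [he, Finset.card_insert_of_notMem (by simp [hxy, hxz]),
      Finset.card_insert_of_notMem (by simp [hyz]), Finset.card_singleton]
  have h2 : Outside x y z ≃ {v : Fin n // ¬(v = x ∨ v = y ∨ v = z)} :=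
    Equiv.subtypeEquivRight (fun v => by tauto)
  rw [Fintype.card_congr h2, Fintype.card_subtype_compl, h1, Fintype.card_fin]

include hxy hyz hxz in
lemma per_triple_bound :
    Fintype.card {G : SimpleGraph (Fin n) // Cond x y z G} * 8 ^ (n - 3) ≤
      2 ^ n.choose 2 * 6 ^ (n - 3) := by
  have hinj := Fintype.card_le_of_injective _ (Ψ_injective x y z hxy hyz hxz)
  rw [Fintype.card_prod, Fintype.card_prod, Fintype.card_fun, Fintype.card_fun,
    card_pat, card_outside x y z hxy hyz hxz] at hinj
  have h8 : Fintype.card (Bool × Bool × Bool) = 8 := by decide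
  rw [h8] at hinj
  exact le_trans hinj (Nat.mul_le_mul_right _ (card_simpleGraph_le n))

end Triple

lemma nat_bound (n : ℕ) :
    Nat.card {G : SimpleGraph (Fin n) // HasGoodTriple G} * 8 ^ (n - 3) ≤
      n * (n - 1) * (n - 2) * (2 ^ n.choose 2 * 6 ^ (n - 3)) := by
  classical
  set B := 2 ^ n.choose 2 * 6 ^ (n - 3) with hB
  have hper : ∀ x y z : Fin n, x ≠ y → y ≠ z → x ≠ z →
      (Finset.univ.filter (fun G : SimpleGraph (Fin n) => Cond x y z G)).card * 8 ^ (n - 3)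
        ≤ B := by
    intro x y z hxy hyz hxz
    have h := per_triple_bound x y z hxy hyz hxz
    rwa [Fintype.card_subtype] at h
  rw [Nat.card_eq_fintype_card, Fintype.card_subtype]
  have hz : ∀ x y : Fin n, y ∈ Finset.univ.erase x →
      ((((Finset.univ.erase x).erase y)).biUnion (fun z =>
        Finset.univ.filter (fun G : SimpleGraph (Fin n) => Cond x y z G))).card * 8 ^ (n - 3)
        ≤ (n - 2) * B := by
    intro x y hy
    have hyx : y ≠ x := (Finset.mem_erase.mp hy).1
    calc ((((Finset.univ.erase x).erase y)).biUnion _).card * 8 ^ (n - 3)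
        ≤ (∑ z ∈ ((Finset.univ.erase x).erase y),
            (Finset.univ.filter (fun G : SimpleGraph (Fin n) => Cond x y z G)).card)
              * 8 ^ (n - 3) := Nat.mul_le_mul_right _ Finset.card_biUnion_le
      _ = ∑ z ∈ ((Finset.univ.erase x).erase y),
            (Finset.univ.filter (fun G : SimpleGraph (Fin n) => Cond x y z G)).card
              * 8 ^ (n - 3) := Finset.sum_mul _ _ _
      _ ≤ ∑ _z ∈ ((Finset.univ.erase x).erase y), B := by
            refine Finset.sum_le_sum fun z hzm => ?_
            have h1 : z ≠ y := (Finset.mem_erase.mp hzm).1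
            have h2 : z ≠ x := (Finset.mem_erase.mp (Finset.mem_erase.mp hzm).2).1
            exact hper x y z hyx.symm h1.symm h2.symm
      _ = ((Finset.univ.erase x).erase y).card * B := by
            rw [Finset.sum_const, smul_eq_mul]
      _ = (n - 2) * B := by
            rw [Finset.card_erase_of_mem hy, Finset.card_erase_of_mem (Finset.mem_univ x),
              Finset.card_univ, Fintype.card_fin, Nat.sub_sub]
  have hyb : ∀ x : Fin n,
      ((Finset.univ.erase x).biUnion (fun y => (((Finset.univ.erase x).erase y)).biUnion
        (fun z => Finset.univ.filter (fun G : SimpleGraph (Fin n) => Cond x y z G)))).card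
          * 8 ^ (n - 3) ≤ (n - 1) * ((n - 2) * B) := by
    intro x
    calc ((Finset.univ.erase x).biUnion _).card * 8 ^ (n - 3)
        ≤ (∑ y ∈ Finset.univ.erase x, ((((Finset.univ.erase x).erase y)).biUnion (fun z =>
            Finset.univ.filter (fun G : SimpleGraph (Fin n) => Cond x y z G))).card)
              * 8 ^ (n - 3) := Nat.mul_le_mul_right _ Finset.card_biUnion_le
      _ = ∑ y ∈ Finset.univ.erase x, ((((Finset.univ.erase x).erase y)).biUnion (fun z =>
            Finset.univ.filter (fun G : SimpleGraph (Fin n) => Cond x y z G))).card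
              * 8 ^ (n - 3) := Finset.sum_mul _ _ _
      _ ≤ ∑ _y ∈ Finset.univ.erase x, (n - 2) * B :=
            Finset.sum_le_sum fun y hy => hz x y hy
      _ = (Finset.univ.erase x).card * ((n - 2) * B) := by
            rw [Finset.sum_const, smul_eq_mul]
      _ = (n - 1) * ((n - 2) * B) := by
            rw [Finset.card_erase_of_mem (Finset.mem_univ x), Finset.card_univ,
              Fintype.card_fin]
  have hsub : Finset.univ.filter (fun G : SimpleGraph (Fin n) => HasGoodTriple G) ⊆
      Finset.univ.biUnion (fun x : Fin n => (Finset.univ.erase x).biUnion (fun y =>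
        (((Finset.univ.erase x).erase y)).biUnion (fun z =>
          Finset.univ.filter (fun G : SimpleGraph (Fin n) => Cond x y z G)))) := by
    intro G hG
    rw [Finset.mem_filter] at hG
    obtain ⟨-, x, y, z, hxy, hyz, hxz, hc⟩ := hG
    refine Finset.mem_biUnion.mpr ⟨x, Finset.mem_univ _, ?_⟩
    refine Finset.mem_biUnion.mpr ⟨y, Finset.mem_erase.mpr ⟨hxy.symm, Finset.mem_univ _⟩, ?_⟩
    refine Finset.mem_biUnion.mpr ⟨z, Finset.mem_erase.mpr ⟨hyz.symm,
      Finset.mem_erase.mpr ⟨hxz.symm, Finset.mem_univ _⟩⟩, ?_⟩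
    exact Finset.mem_filter.mpr ⟨Finset.mem_univ _, hc⟩
  calc (Finset.univ.filter (fun G : SimpleGraph (Fin n) => HasGoodTriple G)).card * 8 ^ (n - 3)
      ≤ (Finset.univ.biUnion (fun x : Fin n => (Finset.univ.erase x).biUnion (fun y =>
          (((Finset.univ.erase x).erase y)).biUnion (fun z =>
            Finset.univ.filter (fun G : SimpleGraph (Fin n) => Cond x y z G))))).card
              * 8 ^ (n - 3) := Nat.mul_le_mul_right _ (Finset.card_le_card hsub)
    _ ≤ (∑ x : Fin n, ((Finset.univ.erase x).biUnion (fun y =>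
          (((Finset.univ.erase x).erase y)).biUnion (fun z =>
            Finset.univ.filter (fun G : SimpleGraph (Fin n) => Cond x y z G)))).card)
              * 8 ^ (n - 3) := Nat.mul_le_mul_right _ Finset.card_biUnion_le
    _ = ∑ x : Fin n, ((Finset.univ.erase x).biUnion (fun y =>
          (((Finset.univ.erase x).erase y)).biUnion (fun z =>
            Finset.univ.filter (fun G : SimpleGraph (Fin n) => Cond x y z G)))).card
              * 8 ^ (n - 3) := Finset.sum_mul _ _ _
    _ ≤ ∑ _x : Fin n, (n - 1) * ((n - 2) * B) :=
          Finset.sum_le_sum fun x _ => hyb x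
    _ = n * ((n - 1) * ((n - 2) * B)) := by
          rw [Finset.sum_const, smul_eq_mul, Finset.card_univ, Fintype.card_fin]
    _ = n * (n - 1) * (n - 2) * B := by ring

end GoodTripleAux

theorem count_graphs_with_good_triple :
    (∀ n : ℕ, (Nat.card {G : SimpleGraph (Fin n) // HasGoodTriple G} : ℝ) ≤
      n * (n - 1) * (n - 2) * (3 / 4 : ℝ) ^ (n - 3) * 2 ^ n.choose 2) ∧
    Tendsto (fun n : ℕ =>
      (Nat.card {G : SimpleGraph (Fin n) // HasGoodTriple G} : ℝ) / 2 ^ n.choose 2)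
      atTop (nhds 0) := by
  have part1 : ∀ n : ℕ, (Nat.card {G : SimpleGraph (Fin n) // HasGoodTriple G} : ℝ) ≤
      n * (n - 1) * (n - 2) * (3 / 4 : ℝ) ^ (n - 3) * 2 ^ n.choose 2 := by
    intro n
    by_cases hn : 3 ≤ n
    · have hb := GoodTripleAux.nat_bound n
      have e1 : ((n - 1 : ℕ) : ℝ) = (n : ℝ) - 1 := by
        rw [Nat.cast_sub (by omega)]; norm_num
      have e2 : ((n - 2 : ℕ) : ℝ) = (n : ℝ) - 2 := by
        rw [Nat.cast_sub (by omega)]; norm_num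
      have hR : (Nat.card {G : SimpleGraph (Fin n) // HasGoodTriple G} : ℝ) * 8 ^ (n - 3) ≤
          (n : ℝ) * ((n : ℝ) - 1) * ((n : ℝ) - 2) *
            (2 ^ n.choose 2 * 6 ^ (n - 3)) := by
        rw [← e1, ← e2]
        exact_mod_cast hb
      have h8 : (0 : ℝ) < 8 ^ (n - 3) := by positivity
      rw [← mul_le_mul_iff_of_pos_right h8]
      refine le_trans hR (le_of_eq ?_)
      have key : ((3 : ℝ) / 4) ^ (n - 3) * 8 ^ (n - 3) = 6 ^ (n - 3) := by
        rw [← mul_pow]; norm_num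
      linear_combination (-((n : ℝ) * ((n : ℝ) - 1) * ((n : ℝ) - 2) * 2 ^ n.choose 2)) * key
    · have hb := GoodTripleAux.nat_bound n
      have hA : n * (n - 1) * (n - 2) = 0 := by
        interval_cases n <;> rfl
      rw [hA, Nat.zero_mul, Nat.le_zero, Nat.mul_eq_zero] at hb
      have hN : Nat.card {G : SimpleGraph (Fin n) // HasGoodTriple G} = 0 := by
        rcases hb with h | h
        · exact h
        · exact absurd h (by positivity)
      rw [hN]
      interval_cases n <;> norm_num
  refine ⟨part1, ?_⟩
  have hlim : Tendsto (fun n : ℕ => ((4 : ℝ) / 3) ^ 3 * ((n : ℝ) ^ 3 * (3 / 4 : ℝ) ^ n))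
      atTop (nhds 0) := by
    have h := tendsto_pow_const_mul_const_pow_of_lt_one 3
      (by norm_num : (0 : ℝ) ≤ 3 / 4) (by norm_num : (3 : ℝ) / 4 < 1)
    simpa using h.const_mul (((4 : ℝ) / 3) ^ 3)
  refine squeeze_zero' (Eventually.of_forall fun n => ?_) ?_ hlim
  · exact div_nonneg (Nat.cast_nonneg _) (by positivity)
  · filter_upwards [eventually_ge_atTop 3] with n hn
    have h2C : (0 : ℝ) < 2 ^ n.choose 2 := by positivity
    have step1 : (Nat.card {G : SimpleGraph (Fin n) // HasGoodTriple G} : ℝ) / 2 ^ n.choose 2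
        ≤ (n : ℝ) * ((n : ℝ) - 1) * ((n : ℝ) - 2) * (3 / 4 : ℝ) ^ (n - 3) := by
      rw [div_le_iff₀ h2C]
      exact part1 n
    refine le_trans step1 ?_
    have hn3 : (3 : ℝ) ≤ (n : ℝ) := by exact_mod_cast hn
    have hpow : ((3 : ℝ) / 4) ^ (n - 3) = (4 / 3 : ℝ) ^ 3 * (3 / 4 : ℝ) ^ n := by
      rw [pow_sub₀ _ (by norm_num) hn]
      norm_num
      ring
    rw [hpow]
    have hfac : (n : ℝ) * ((n : ℝ) - 1) * ((n : ℝ) - 2) ≤ (n : ℝ) ^ 3 := by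
      nlinarith [hn3]
    have hnn : (0 : ℝ) ≤ (4 / 3 : ℝ) ^ 3 * (3 / 4 : ℝ) ^ n := by positivity
    calc (n : ℝ) * ((n : ℝ) - 1) * ((n : ℝ) - 2) * ((4 / 3 : ℝ) ^ 3 * (3 / 4 : ℝ) ^ n)
        ≤ (n : ℝ) ^ 3 * ((4 / 3 : ℝ) ^ 3 * (3 / 4 : ℝ) ^ n) :=
          mul_le_mul_of_nonneg_right hfac hnn
      _ = ((4 : ℝ) / 3) ^ 3 * ((n : ℝ) ^ 3 * (3 / 4 : ℝ) ^ n) := by ring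
end

section
/- The number of labeled graphs G on {1,…,n} for which there exist four distinct vertices x, y, s, t such that every vertex v ∉ {x,y,s,t} agrees on {x,y} or agrees on {s,t} is at most n(n−1)(n−2)(n−3) · (3/4)^{n−4} · 2^{C(n,2)}. Consequently, the proportion of such labeled n-vertex graphs tends to 0 as n → ∞. -/
open Filter

/-- `G` admits four distinct vertices `x, y, s, t` such that every other vertex
agrees on `{x,y}` or on `{s,t}`. -/
def HasGoodQuadruple {n : ℕ} (G : SimpleGraph (Fin n)) : Prop :=
  ∃ x y s t : Fin n, x ≠ y ∧ x ≠ s ∧ x ≠ t ∧ y ≠ s ∧ y ≠ t ∧ s ≠ t ∧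
    ∀ v : Fin n, v ≠ x → v ≠ y → v ≠ s → v ≠ t →
      (agreesOn G v x y ∨ agreesOn G v s t)

/-- The set of admissible 4-tuples of booleans: first two equal, or last two equal. -/
private def SBool : Type := {p : (Bool × Bool) × (Bool × Bool) // p.1.1 = p.1.2 ∨ p.2.1 = p.2.2}

private instance : Fintype SBool := by unfold SBool; infer_instance

private lemma card_SBool : Fintype.card SBool = 12 := by decide

/-- A "cross" edge: one endpoint outside `Q`, one inside. -/
private def Cross {n : ℕ} (Q : Finset (Fin n)) (e : Sym2 (Fin n)) : Prop :=
  ∃ v u : Fin n, v ∉ Q ∧ u ∈ Q ∧ e = s(v, u)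

private lemma cross_iff {n : ℕ} (Q : Finset (Fin n)) (e : Sym2 (Fin n)) :
    Cross Q e ↔ ∃ v u : Fin n, v ∉ Q ∧ u ∈ Q ∧ e = s(v, u) := Iff.rfl

private lemma cross_not_isDiag {n : ℕ} {Q : Finset (Fin n)} {e : Sym2 (Fin n)}
    (h : Cross Q e) : ¬ e.IsDiag := by
  obtain ⟨v, u, hv, hu, rfl⟩ := h
  rw [Sym2.mk_isDiag_iff]
  rintro rfl
  exact hv hu

open Finset in
private lemma quad_bound {n : ℕ} (x y s t : Fin n) (hxy : x ≠ y) (hxs : x ≠ s) (hxt : x ≠ t)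
    (hys : y ≠ s) (hyt : y ≠ t) (hst : s ≠ t) :
    Nat.card {G : SimpleGraph (Fin n) //
        ∀ v : Fin n, v ≠ x → v ≠ y → v ≠ s → v ≠ t →
          (agreesOn G v x y ∨ agreesOn G v s t)} ≤
      12 ^ (n - 4) * 2 ^ (n.choose 2 - 4 * (n - 4)) := by
  classical
  set Q : Finset (Fin n) := {x, y, s, t} with hQdef
  have hQcard : Q.card = 4 := by
    rw [hQdef,
      Finset.card_insert_of_notMem (by simp [hxy, hxs, hxt]),
      Finset.card_insert_of_notMem (by simp [hys, hyt]),
      Finset.card_insert_of_notMem (by simp [hst]),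
      Finset.card_singleton]
  -- cardinality of the set of cross edges
  have hE1 : (univ.filter (Cross Q)).card = 4 * (n - 4) := by
    have hbij : (Qᶜ ×ˢ Q).card = (univ.filter (Cross Q)).card := by
      refine Finset.card_bij (fun p _ => Sym2.mk p.1 p.2) ?_ ?_ ?_
      · rintro ⟨v, u⟩ hp
        rw [Finset.mem_product, Finset.mem_compl] at hp
        exact Finset.mem_filter.mpr ⟨Finset.mem_univ _, ⟨v, u, hp.1, hp.2, rfl⟩⟩
      · rintro ⟨v, u⟩ hp ⟨v', u'⟩ hp' h
        rw [Finset.mem_product, Finset.mem_compl] at hp hp'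
        rw [Sym2.eq_iff] at h
        rcases h with ⟨rfl, rfl⟩ | ⟨rfl, rfl⟩
        · rfl
        · exact absurd hp'.2 hp.1
      · rintro e he
        obtain ⟨v, u, hv, hu, rfl⟩ := (Finset.mem_filter.mp he).2
        exact ⟨(v, u), Finset.mem_product.mpr ⟨Finset.mem_compl.mpr hv, hu⟩, rfl⟩
    rw [← hbij, Finset.card_product, Finset.card_compl, hQcard, Fintype.card_fin, mul_comm]
  have hE : (univ.filter (fun e : Sym2 (Fin n) => ¬ e.IsDiag)).card = n.choose 2 := by
    rw [← Fintype.card_subtype, Sym2.card_subtype_not_diag, Fintype.card_fin]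
  set E2 : Finset (Sym2 (Fin n)) :=
    univ.filter (fun e => ¬ e.IsDiag ∧ ¬ Cross Q e) with hE2def
  have hkey : (univ.filter (Cross Q)).card + E2.card = n.choose 2 := by
    rw [← hE]
    have h1 : (univ.filter (fun e : Sym2 (Fin n) => ¬ e.IsDiag)).filter (Cross Q)
        = univ.filter (Cross Q) := by
      rw [Finset.filter_filter]
      apply Finset.filter_congr
      intro e _
      constructor
      · rintro ⟨_, h⟩; exact h
      · intro h; exact ⟨cross_not_isDiag h, h⟩
    have h2 : (univ.filter (fun e : Sym2 (Fin n) => ¬ e.IsDiag)).filter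
        (fun e => ¬ Cross Q e) = E2 := by
      rw [hE2def, Finset.filter_filter]
    rw [← h1, ← h2]
    exact Finset.card_filter_add_card_filter_not _
  have hE2card : E2.card = n.choose 2 - 4 * (n - 4) := by omega
  -- the injection
  have hmain : Nat.card {G : SimpleGraph (Fin n) //
      ∀ v : Fin n, v ≠ x → v ≠ y → v ≠ s → v ≠ t →
        (agreesOn G v x y ∨ agreesOn G v s t)} ≤
      Nat.card (({v : Fin n // v ∉ Q} → SBool) × ({e : Sym2 (Fin n) // e ∈ E2} → Bool)) := by
    have hprop : ∀ (G : {G : SimpleGraph (Fin n) //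
        ∀ v : Fin n, v ≠ x → v ≠ y → v ≠ s → v ≠ t →
          (agreesOn G v x y ∨ agreesOn G v s t)}) (v : {v : Fin n // v ∉ Q}),
        (decide (G.1.Adj v.1 x) = decide (G.1.Adj v.1 y)) ∨
        (decide (G.1.Adj v.1 s) = decide (G.1.Adj v.1 t)) := by
      intro G v
      have hv := G.2 v.1 (fun h => v.2 (by simp [hQdef, h])) (fun h => v.2 (by simp [hQdef, h]))
        (fun h => v.2 (by simp [hQdef, h])) (fun h => v.2 (by simp [hQdef, h]))
      unfold agreesOn at hv
      rcases hv with h | h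
      · exact Or.inl (decide_eq_decide.mpr h)
      · exact Or.inr (decide_eq_decide.mpr h)
    refine Nat.card_le_card_of_injective (fun G =>
      (fun v => (⟨((decide (G.1.Adj v.1 x), decide (G.1.Adj v.1 y)),
                  (decide (G.1.Adj v.1 s), decide (G.1.Adj v.1 t))), hprop G v⟩ : SBool),
       fun e => decide (e.1 ∈ G.1.edgeSet))) ?_
    intro G G' h
    have h1 := congrArg Prod.fst h
    have h2 := congrArg Prod.snd h
    simp only at h1 h2
    apply Subtype.ext
    rw [← SimpleGraph.edgeSet_inj]
    ext e
    induction e with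
    | _ a b =>
      by_cases hab : a = b
      · subst hab
        simp [SimpleGraph.mem_edgeSet]
      have key : ∀ v u : Fin n, v ∉ Q → u ∈ Q → (G.1.Adj v u ↔ G'.1.Adj v u) := by
        intro v u hv hu
        have hv1 := congrFun h1 ⟨v, hv⟩
        have hv2 := congrArg Subtype.val hv1
        simp only [Prod.mk.injEq] at hv2
        obtain ⟨⟨e1, e2⟩, e3, e4⟩ := hv2
        rw [hQdef] at hu
        simp only [Finset.mem_insert, Finset.mem_singleton] at hu
        rcases hu with rfl | rfl | rfl | rfl
        · exact decide_eq_decide.mp e1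
        · exact decide_eq_decide.mp e2
        · exact decide_eq_decide.mp e3
        · exact decide_eq_decide.mp e4
      by_cases hc : Cross Q (s(a, b))
      · obtain ⟨v, u, hv, hu, heq⟩ := hc
        have hvu := key v u hv hu
        rw [Sym2.eq_iff] at heq
        simp only [SimpleGraph.mem_edgeSet]
        rcases heq with ⟨rfl, rfl⟩ | ⟨rfl, rfl⟩
        · exact hvu
        · rw [G.1.adj_comm, G'.1.adj_comm]; exact hvu
      · have hmem : s(a, b) ∈ E2 := by
          rw [hE2def, Finset.mem_filter]
          exact ⟨Finset.mem_univ _, by rw [Sym2.mk_isDiag_iff]; exact hab, hc⟩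
        have := congrFun h2 ⟨s(a, b), hmem⟩
        exact decide_eq_decide.mp this
  refine hmain.trans (le_of_eq ?_)
  rw [Nat.card_eq_fintype_card, Fintype.card_prod, Fintype.card_fun, Fintype.card_fun,
    card_SBool, Fintype.card_bool, Fintype.card_coe, hE2card,
    Fintype.card_subtype_compl, Fintype.card_coe, Fintype.card_fin, hQcard]


private lemma vec_injective {α : Type*} {a b c d : α} (h1 : a ≠ b) (h2 : a ≠ c) (h3 : a ≠ d)
    (h4 : b ≠ c) (h5 : b ≠ d) (h6 : c ≠ d) : Function.Injective ![a, b, c, d] := by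
  intro i j hij
  fin_cases i <;> fin_cases j <;> simp_all

open Finset in
private lemma nat_bound (n : ℕ) :
    Nat.card {G : SimpleGraph (Fin n) // HasGoodQuadruple G} ≤
      n.descFactorial 4 * (12 ^ (n - 4) * 2 ^ (n.choose 2 - 4 * (n - 4))) := by
  classical
  rw [Nat.card_eq_fintype_card, Fintype.card_subtype]
  set D : Finset ((Fin n × Fin n) × Fin n × Fin n) :=
    univ.filter (fun q => q.1.1 ≠ q.1.2 ∧ q.1.1 ≠ q.2.1 ∧ q.1.1 ≠ q.2.2 ∧
      q.1.2 ≠ q.2.1 ∧ q.1.2 ≠ q.2.2 ∧ q.2.1 ≠ q.2.2) with hDdef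
  have hsub : univ.filter HasGoodQuadruple ⊆
      D.biUnion (fun q => univ.filter (fun G : SimpleGraph (Fin n) =>
        ∀ v : Fin n, v ≠ q.1.1 → v ≠ q.1.2 → v ≠ q.2.1 → v ≠ q.2.2 →
          (agreesOn G v q.1.1 q.1.2 ∨ agreesOn G v q.2.1 q.2.2))) := by
    intro G hG
    obtain ⟨x, y, s, t, h1, h2, h3, h4, h5, h6, h7⟩ := (Finset.mem_filter.mp hG).2
    refine Finset.mem_biUnion.mpr ⟨((x, y), (s, t)), ?_, ?_⟩
    · rw [hDdef, Finset.mem_filter]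
      exact ⟨Finset.mem_univ _, h1, h2, h3, h4, h5, h6⟩
    · exact Finset.mem_filter.mpr ⟨Finset.mem_univ _, h7⟩
  have hDcard : D.card ≤ n.descFactorial 4 := by
    have hcard4 : Fintype.card (Fin 4 ↪ Fin n) = n.descFactorial 4 := by
      rw [Fintype.card_embedding_eq, Fintype.card_fin, Fintype.card_fin]
    rw [← hcard4, ← Fintype.card_coe]
    refine Fintype.card_le_of_injective (fun q =>
      ⟨![q.1.1.1, q.1.1.2, q.1.2.1, q.1.2.2], ?_⟩) ?_
    · obtain ⟨h1, h2, h3, h4, h5, h6⟩ := (Finset.mem_filter.mp q.2).2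
      exact vec_injective h1 h2 h3 h4 h5 h6
    · intro q q' h
      simp only [Function.Embedding.mk.injEq] at h
      have e1 := congrFun h 0
      have e2 := congrFun h 1
      have e3 := congrFun h 2
      have e4 := congrFun h 3
      simp only [Matrix.cons_val_zero, Matrix.cons_val_one, Matrix.head_cons,
        Matrix.cons_val_two, Matrix.tail_cons, Matrix.cons_val_three] at e1 e2 e3 e4
      exact Subtype.ext (Prod.ext (Prod.ext e1 e2) (Prod.ext e3 e4))
  calc (univ.filter HasGoodQuadruple).card
      ≤ (D.biUnion _).card := Finset.card_le_card hsub
    _ ≤ ∑ q ∈ D, (univ.filter (fun G : SimpleGraph (Fin n) =>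
        ∀ v : Fin n, v ≠ q.1.1 → v ≠ q.1.2 → v ≠ q.2.1 → v ≠ q.2.2 →
          (agreesOn G v q.1.1 q.1.2 ∨ agreesOn G v q.2.1 q.2.2))).card :=
        Finset.card_biUnion_le
    _ ≤ D.card * (12 ^ (n - 4) * 2 ^ (n.choose 2 - 4 * (n - 4))) := by
        rw [← smul_eq_mul]
        apply Finset.sum_le_card_nsmul
        intro q hq
        obtain ⟨h1, h2, h3, h4, h5, h6⟩ := (Finset.mem_filter.mp hq).2
        have hqb := quad_bound q.1.1 q.1.2 q.2.1 q.2.2 h1 h2 h3 h4 h5 h6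
        rwa [Nat.card_eq_fintype_card, Fintype.card_subtype] at hqb
    _ ≤ n.descFactorial 4 * (12 ^ (n - 4) * 2 ^ (n.choose 2 - 4 * (n - 4))) := by
        exact Nat.mul_le_mul_right _ hDcard

private lemma real_bound (n : ℕ) :
    (Nat.card {G : SimpleGraph (Fin n) // HasGoodQuadruple G} : ℝ) ≤
      n * (n - 1) * (n - 2) * (n - 3) * (3 / 4 : ℝ) ^ (n - 4) * 2 ^ n.choose 2 := by
  rcases lt_or_ge n 4 with h | h
  · have h0 : Nat.card {G : SimpleGraph (Fin n) // HasGoodQuadruple G} = 0 := by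
      have hb := nat_bound n
      rw [Nat.descFactorial_eq_zero_iff_lt.mpr h, zero_mul] at hb
      omega
    rw [h0]
    interval_cases n <;> norm_num
  · obtain ⟨m, rfl⟩ : ∃ m, n = m + 4 := ⟨n - 4, by omega⟩
    have h4 : 4 * ((m + 4) - 4) ≤ (m + 4).choose 2 := by
      simp only [Nat.add_sub_cancel]
      rw [Nat.choose_two_right]
      rw [Nat.le_div_iff_mul_le two_pos]
      have h1 : m + 4 - 1 = m + 3 := by omega
      rw [h1]
      zify
      nlinarith [sq_nonneg ((m : ℤ) - 1)]
    have hb := nat_bound (m + 4)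
    have hb' : (Nat.card {G : SimpleGraph (Fin (m + 4)) // HasGoodQuadruple G} : ℝ) ≤
        (((m + 4).descFactorial 4 * (12 ^ ((m + 4) - 4) *
          2 ^ ((m + 4).choose 2 - 4 * ((m + 4) - 4)))) : ℕ) := by
      exact_mod_cast hb
    refine hb'.trans (le_of_eq ?_)
    have h3' : m + 4 - 3 = m + 1 := by omega
    have h2' : m + 4 - 2 = m + 2 := by omega
    have h1' : m + 4 - 1 = m + 3 := by omega
    have h0' : m + 4 - 0 = m + 4 := by omega
    have hdesc : (m + 4).descFactorial 4 = (m + 1) * ((m + 2) * ((m + 3) * (m + 4))) := by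
      rw [Nat.descFactorial_succ, Nat.descFactorial_succ, Nat.descFactorial_succ,
        Nat.descFactorial_succ, Nat.descFactorial_zero, h3', h2', h1', h0', mul_one]
    have hsub : (m + 4) - 4 = m := by omega
    have hpow : (2 : ℝ) ^ ((m + 4).choose 2 - 4 * m) * 2 ^ (4 * m) =
        2 ^ (m + 4).choose 2 := by
      rw [← pow_add, Nat.sub_add_cancel (by simpa [hsub] using h4)]
    have h12 : (12 : ℝ) ^ m = (3 / 4 : ℝ) ^ m * 2 ^ (4 * m) := by
      rw [pow_mul, ← mul_pow]
      norm_num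
    push_cast [hdesc, hsub]
    rw [h12, ← hpow]
    ring

theorem count_graphs_with_good_quadruple :
    (∀ n : ℕ, (Nat.card {G : SimpleGraph (Fin n) // HasGoodQuadruple G} : ℝ) ≤
      n * (n - 1) * (n - 2) * (n - 3) * (3 / 4 : ℝ) ^ (n - 4) * 2 ^ n.choose 2) ∧
    Tendsto (fun n : ℕ =>
      (Nat.card {G : SimpleGraph (Fin n) // HasGoodQuadruple G} : ℝ) / 2 ^ n.choose 2)
      atTop (nhds 0) := by
  refine ⟨real_bound, ?_⟩
  have hg : Tendsto (fun n : ℕ => (256 / 81 : ℝ) * ((n : ℝ) ^ 4 * (3 / 4 : ℝ) ^ n))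
      atTop (nhds 0) := by
    have := (tendsto_pow_const_mul_const_pow_of_lt_one 4
      (by norm_num : (0:ℝ) ≤ 3 / 4) (by norm_num : (3 / 4 : ℝ) < 1)).const_mul (256 / 81 : ℝ)
    simpa using this
  refine squeeze_zero' (Eventually.of_forall fun n => by positivity) ?_ hg
  filter_upwards [eventually_ge_atTop 4] with n hn
  have hn' : (4 : ℝ) ≤ (n : ℝ) := by exact_mod_cast hn
  have h2 : (0 : ℝ) < 2 ^ n.choose 2 := by positivity
  rw [div_le_iff₀ h2]
  have hpow34 : ((3 : ℝ) / 4) ^ (n - 4) = (256 / 81) * (3 / 4 : ℝ) ^ n := by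
    have hsub : (n - 4) + 4 = n := by omega
    calc ((3 : ℝ) / 4) ^ (n - 4) = (3 / 4 : ℝ) ^ (n - 4) * ((3 / 4 : ℝ) ^ 4 * (256 / 81)) := by
          norm_num
      _ = (256 / 81) * (3 / 4 : ℝ) ^ ((n - 4) + 4) := by rw [pow_add]; ring
      _ = _ := by rw [hsub]
  refine (real_bound n).trans ?_
  have hfac : (n : ℝ) * ((n : ℝ) - 1) * ((n : ℝ) - 2) * ((n : ℝ) - 3) ≤ (n : ℝ) ^ 4 := by
    nlinarith [hn', sq_nonneg ((n : ℝ) - 2), sq_nonneg ((n : ℝ) - 1)]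
  have hp : (0 : ℝ) ≤ (3 / 4 : ℝ) ^ n := by positivity
  have hmain : (n : ℝ) * ((n : ℝ) - 1) * ((n : ℝ) - 2) * ((n : ℝ) - 3) * (3 / 4 : ℝ) ^ (n - 4) ≤
      (256 / 81 : ℝ) * ((n : ℝ) ^ 4 * (3 / 4 : ℝ) ^ n) := by
    rw [hpow34]
    nlinarith [mul_le_mul_of_nonneg_right hfac hp]
  exact mul_le_mul_of_nonneg_right hmain h2.le
end

section
/- Fix 2k distinct labeled vertices v₁,…,v_{2k} among n vertices and a permutation π of {1,…,k}. In G(n,1/2), the probability that there exists a decoder D ⊆ {ℓ₁,…,ℓ_k}² such that the map v_i ↦ i is an isomorphism between the induced subgraph on {v₁,…,v_{2k}} and the letter graph Γ_D(ℓ₁⋯ℓ_k ℓ_{π(1)}⋯ℓ_{π(k)}) equals 2^{−k(k−1)}. -/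
section Auxiliary

variable {m n : ℕ}

/-- pairs with fst < snd correspond to non-diagonal elements of Sym2 -/
noncomputable def ltEquivNotDiag {α : Type*} [LinearOrder α] :
    {p : α × α // p.1 < p.2} ≃ {a : Sym2 α // ¬ a.IsDiag} where
  toFun p := ⟨Sym2.mk p.1.1 p.1.2, by
    rw [Sym2.mk_isDiag_iff]; exact p.2.ne⟩
  invFun a := ⟨((Sym2.sortEquiv a.1).1.1, (Sym2.sortEquiv a.1).1.2), by
    refine lt_of_le_of_ne (Sym2.sortEquiv a.1).2 fun h => a.2 ?_
    have : a.1 = Sym2.mk (Sym2.sortEquiv a.1).1.1 (Sym2.sortEquiv a.1).1.2 := by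
      conv_lhs => rw [← Sym2.sortEquiv.symm_apply_apply a.1]
      rfl
    rw [this, Sym2.mk_isDiag_iff]
    exact h⟩
  left_inv p := by
    ext : 2
    · show ((Sym2.sortEquiv (Sym2.mk p.1.1 p.1.2)).1).1 = p.1.1
      have : Sym2.sortEquiv (Sym2.mk p.1.1 p.1.2) = ⟨p.1, p.2.le⟩ :=
        Sym2.sortEquiv.apply_symm_apply ⟨p.1, p.2.le⟩
      rw [this]
    · show ((Sym2.sortEquiv (Sym2.mk p.1.1 p.1.2)).1).2 = p.1.2
      have : Sym2.sortEquiv (Sym2.mk p.1.1 p.1.2) = ⟨p.1, p.2.le⟩ :=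
        Sym2.sortEquiv.apply_symm_apply ⟨p.1, p.2.le⟩
      rw [this]
  right_inv a := by
    ext : 1
    exact Sym2.sortEquiv.symm_apply_apply a.1

lemma card_lt_pairs (t : ℕ) :
    Nat.card {p : Fin t × Fin t // p.1 < p.2} = t.choose 2 := by
  rw [Nat.card_congr (ltEquivNotDiag), Nat.card_eq_fintype_card,
    Sym2.card_subtype_not_diag, Fintype.card_fin]

/-- The set of "free" index pairs: ordered pairs not both in the range of `v`. -/
def FreeIdx (v : Fin m → Fin n) : Type :=
  {p : Fin n × Fin n // p.1 < p.2 ∧ ¬(p.1 ∈ Set.range v ∧ p.2 ∈ Set.range v)}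

instance (v : Fin m → Fin n) : Finite (FreeIdx v) := by
  unfold FreeIdx; infer_instance

instance (v : Fin m → Fin n) : Nonempty (FreeIdx v → Prop) := ⟨fun _ => True⟩

instance (v : Fin m → Fin n) : Finite (FreeIdx v → Prop) := by infer_instance

/-- selection of the ordered version of a pair -/
def sel_s13 (a b : Fin n) : Fin n × Fin n := if a < b then (a, b) else (b, a)

lemma sel_comm (a b : Fin n) : sel_s13 a b = sel_s13 b a := by
  unfold sel_s13
  rcases lt_trichotomy a b with h | h | h
  · rw [if_pos h, if_neg (not_lt_of_gt h)]
  · simp [h]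
  · rw [if_neg (not_lt_of_gt h), if_pos h]

lemma sel_lt (a b : Fin n) (hab : a ≠ b) : (sel_s13 a b).1 < (sel_s13 a b).2 := by
  unfold sel_s13
  rcases lt_or_gt_of_ne hab with h | h
  · rw [if_pos h]; exact h
  · rw [if_neg (not_lt_of_gt h)]; exact h

/-- A graph on `Fin n` is determined by its restriction along an injective map `v` together
with free data on all the remaining potential edges. -/
noncomputable def graphSplit (v : Fin m → Fin n) (hv : Function.Injective v) :
    SimpleGraph (Fin n) ≃ SimpleGraph (Fin m) × (FreeIdx v → Prop) where
  toFun G := (G.comap v, fun p => G.Adj p.1.1 p.1.2)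
  invFun gf :=
    { Adj := fun a b =>
        (∃ i j : Fin m, v i = a ∧ v j = b ∧ gf.1.Adj i j) ∨
        (∃ h : (sel_s13 a b).1 < (sel_s13 a b).2 ∧
            ¬((sel_s13 a b).1 ∈ Set.range v ∧ (sel_s13 a b).2 ∈ Set.range v),
          gf.2 ⟨sel_s13 a b, h⟩)
      symm := by
        constructor
        rintro a b (⟨i, j, hi, hj, hadj⟩ | ⟨h, hf⟩)
        · exact Or.inl ⟨j, i, hj, hi, hadj.symm⟩
        · rw [← sel_comm a b]
          exact Or.inr ⟨h, hf⟩
      loopless := by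
        constructor
        rintro a (⟨i, j, hi, hj, hadj⟩ | ⟨h, _⟩)
        · exact gf.1.irrefl (v := j) (by rwa [hv (hi.trans hj.symm)] at hadj)
        · exact absurd h.1 (by simp [sel_s13]) }
  left_inv G := by
    ext a b
    simp only [SimpleGraph.comap_adj]
    constructor
    · rintro (⟨i, j, hi, hj, hadj⟩ | ⟨h, hf⟩)
      · rwa [hi, hj] at hadj
      · change G.Adj (sel_s13 a b).1 (sel_s13 a b).2 at hf
        unfold sel_s13 at hf
        split at hf
        · exact hf
        · exact hf.symm
    · intro hG
      by_cases hr : a ∈ Set.range v ∧ b ∈ Set.range v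
      · obtain ⟨⟨i, hi⟩, ⟨j, hj⟩⟩ := hr
        exact Or.inl ⟨i, j, hi, hj, by rwa [hi, hj]⟩
      · refine Or.inr ⟨⟨sel_lt a b hG.ne, ?_⟩, ?_⟩
        · unfold sel_s13
          split
          · exact hr
          · exact fun hh => hr ⟨hh.2, hh.1⟩
        · change G.Adj (sel_s13 a b).1 (sel_s13 a b).2
          unfold sel_s13
          split
          · exact hG
          · exact hG.symm
  right_inv := by
    rintro ⟨g, f⟩
    refine Prod.ext ?_ ?_
    · ext i j
      simp only [SimpleGraph.comap_adj]
      constructor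
      · rintro (⟨i', j', hi, hj, hadj⟩ | ⟨h, _⟩)
        · rwa [hv hi, hv hj] at hadj
        · refine absurd ⟨?_, ?_⟩ h.2
          · unfold sel_s13; split <;> [exact ⟨i, rfl⟩; exact ⟨j, rfl⟩]
          · unfold sel_s13; split <;> [exact ⟨j, rfl⟩; exact ⟨i, rfl⟩]
      · intro hg
        exact Or.inl ⟨i, j, rfl, rfl, hg⟩
    · funext p
      obtain ⟨⟨a, b⟩, hlt, hnr⟩ := p
      have hsel : sel_s13 a b = (a, b) := if_pos hlt
      apply propext
      constructor
      · rintro (⟨i, j, hi, hj, _⟩ | ⟨h, hf⟩)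
        · exact absurd ⟨⟨i, hi⟩, ⟨j, hj⟩⟩ hnr
        · revert h hf
          rw [hsel]
          intro h hf
          exact hf
      · intro hf
        have h' : (sel_s13 a b).1 < (sel_s13 a b).2 ∧
            ¬((sel_s13 a b).1 ∈ Set.range v ∧ (sel_s13 a b).2 ∈ Set.range v) := by
          rw [hsel]; exact ⟨hlt, hnr⟩
        refine Or.inr ⟨h', ?_⟩
        have he : (⟨sel_s13 a b, h'⟩ : FreeIdx v) = ⟨(a, b), hlt, hnr⟩ := Subtype.ext hsel
        rw [he]
        exact hf

lemma card_comap_mem (v : Fin m → Fin n) (hv : Function.Injective v)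
    (S : Set (SimpleGraph (Fin m))) :
    Nat.card {G : SimpleGraph (Fin n) // G.comap v ∈ S} =
      Nat.card S * Nat.card (FreeIdx v → Prop) := by
  have e1 : {G : SimpleGraph (Fin n) // G.comap v ∈ S} ≃
      {x : SimpleGraph (Fin m) × (FreeIdx v → Prop) // x.1 ∈ S} :=
    (graphSplit v hv).subtypeEquiv fun G => Iff.rfl
  have e2 : {x : SimpleGraph (Fin m) × (FreeIdx v → Prop) // x.1 ∈ S} ≃
      ↥S × (FreeIdx v → Prop) :=
    { toFun := fun x => (⟨x.1.1, x.2⟩, x.1.2)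
      invFun := fun y => ⟨(y.1.1, y.2), y.1.2⟩
      left_inv := fun x => rfl
      right_inv := fun y => rfl }
  rw [Nat.card_congr (e1.trans e2), Nat.card_prod]

instance : Subsingleton (SimpleGraph (Fin 0)) :=
  ⟨fun G H => by ext i; exact i.elim0⟩

lemma card_prop : Nat.card Prop = 2 := by
  rw [Nat.card_congr Equiv.propEquivBool, Nat.card_eq_fintype_card, Fintype.card_bool]

lemma card_simpleGraph (t : ℕ) :
    Nat.card (SimpleGraph (Fin t)) = 2 ^ t.choose 2 := by
  have hv : Function.Injective (fun i : Fin 0 => (i.elim0 : Fin t)) := fun i => i.elim0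
  have h := card_comap_mem _ hv Set.univ
  rw [Nat.card_congr (Equiv.subtypeUnivEquiv fun _ => Set.mem_univ _)] at h
  rw [h, Nat.card_congr (Equiv.Set.univ _)]
  haveI : Unique (SimpleGraph (Fin 0)) := uniqueOfSubsingleton ⊥
  rw [Nat.card_unique, one_mul, Nat.card_fun, card_prop]
  congr 1
  rw [← card_lt_pairs t]
  apply Nat.card_congr
  apply Equiv.subtypeEquivRight
  intro p
  simp [FreeIdx]

lemma letterGraph_injective (k : ℕ) (π : Equiv.Perm (Fin k)) :
    Function.Injective (fun D : Set (Fin k × Fin k) => letterGraph D (prefixWord k π)) := by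
  intro D₁ D₂ h
  ext ⟨a, b⟩
  have hk : (a : ℕ) < k := a.2
  have hbk : ((π.symm b : Fin k) : ℕ) < k := (π.symm b).2
  set i : Fin (2 * k) := ⟨a, by omega⟩ with hi
  set j : Fin (2 * k) := ⟨k + (π.symm b : Fin k), by omega⟩ with hj
  have hij : i < j := by
    rw [Fin.lt_def]
    simp only [hi, hj]
    omega
  have hwi : prefixWord k π i = a := by
    rw [prefixWord, dif_pos (show (i : ℕ) < k from hk)]
  have hwj : prefixWord k π j = b := by
    rw [prefixWord, dif_neg (by rw [hj]; simp)]
    have : (⟨(j : ℕ) - k, by have := j.2; omega⟩ : Fin k) = π.symm b := by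
      apply Fin.ext
      simp [hj]
    rw [this, Equiv.apply_symm_apply]
  have hadj : (letterGraph D₁ (prefixWord k π)).Adj i j ↔
      (letterGraph D₂ (prefixWord k π)).Adj i j := by
    simp only at h; rw [h]
  have hval : ∀ D : Set (Fin k × Fin k),
      (letterGraph D (prefixWord k π)).Adj i j ↔ (a, b) ∈ D := by
    intro D
    show (i < j ∧ _ ∈ D) ∨ (j < i ∧ _ ∈ D) ↔ _
    rw [hwi, hwj]
    constructor
    · rintro (⟨-, hD⟩ | ⟨hji, -⟩)
      · exact hD
      · exact absurd hij (not_lt_of_gt hji)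
    · intro hD
      exact Or.inl ⟨hij, hD⟩
  show (a, b) ∈ D₁ ↔ (a, b) ∈ D₂
  rw [← hval D₁, ← hval D₂]
  exact hadj

end Auxiliary

theorem prob_prefixWord_pattern {n k : ℕ} (v : Fin (2 * k) → Fin n)
    (hv : Function.Injective v) (π : Equiv.Perm (Fin k)) :
    (Nat.card {G : SimpleGraph (Fin n) // ∃ D : Set (Fin k × Fin k),
        ∀ i j : Fin (2 * k),
          G.Adj (v i) (v j) ↔ (letterGraph D (prefixWord k π)).Adj i j} : ℝ) /
      2 ^ n.choose 2 = (1 / 2 : ℝ) ^ (k * (k - 1)) := by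
  classical
  set w := prefixWord k π with hw
  set S : Set (SimpleGraph (Fin (2 * k))) :=
    Set.range (fun D : Set (Fin k × Fin k) => letterGraph D w) with hSdef
  have hP : ∀ G : SimpleGraph (Fin n),
      (∃ D : Set (Fin k × Fin k), ∀ i j : Fin (2 * k),
        G.Adj (v i) (v j) ↔ (letterGraph D w).Adj i j) ↔ G.comap v ∈ S := by
    intro G
    constructor
    · rintro ⟨D, hD⟩
      exact ⟨D, by ext i j; exact (hD i j).symm⟩
    · rintro ⟨D, hD⟩
      refine ⟨D, fun i j => ?_⟩
      simp only at hD
      rw [hD]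
      exact Iff.rfl
  have hcongr : Nat.card {G : SimpleGraph (Fin n) // ∃ D : Set (Fin k × Fin k),
        ∀ i j : Fin (2 * k),
          G.Adj (v i) (v j) ↔ (letterGraph D w).Adj i j}
      = Nat.card {G : SimpleGraph (Fin n) // G.comap v ∈ S} :=
    Nat.card_congr (Equiv.subtypeEquivRight hP)
  have hS : Nat.card S = 2 ^ (k * k) := by
    rw [hSdef, Nat.card_range_of_injective (letterGraph_injective k π)]
    have : Nat.card (Set (Fin k × Fin k)) = Nat.card ((Fin k × Fin k) → Prop) := rfl
    rw [this, Nat.card_fun, card_prop, Nat.card_prod]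
    simp
  set c := Nat.card (FreeIdx v → Prop) with hcdef
  have hc : 0 < c := Nat.card_pos
  have hcount : Nat.card {G : SimpleGraph (Fin n) // G.comap v ∈ S}
      = 2 ^ (k * k) * c := by
    rw [card_comap_mem v hv S, hS]
  have htotal : (2 : ℕ) ^ n.choose 2 = 2 ^ ((2 * k).choose 2) * c := by
    have h := card_comap_mem v hv Set.univ
    rw [Nat.card_congr (Equiv.subtypeUnivEquiv fun _ => Set.mem_univ _)] at h
    rw [Nat.card_congr (Equiv.Set.univ _)] at h
    rw [card_simpleGraph, card_simpleGraph] at h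
    exact h
  have hchoose : (2 * k).choose 2 = k * k + k * (k - 1) := by
    rw [Nat.choose_two_right]
    rcases k with _ | m
    · rfl
    · have h1 : 2 * (m + 1) - 1 = 2 * m + 1 := by omega
      have h2 : (m + 1) - 1 = m := by omega
      rw [h1, h2]
      have h3 : 2 * (m + 1) * (2 * m + 1) = 2 * ((m + 1) * (m + 1) + (m + 1) * m) := by
        ring
      rw [h3, Nat.mul_div_cancel_left _ (by norm_num)]
  rw [hcongr, hcount]
  have h2r : (2 : ℝ) ^ n.choose 2 = ((2 ^ n.choose 2 : ℕ) : ℝ) := by push_cast; rfl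
  rw [h2r, htotal, hchoose]
  push_cast
  have hcne : (c : ℝ) ≠ 0 := Nat.cast_ne_zero.mpr hc.ne'
  rw [pow_add, one_div, inv_pow]
  field_simp
end

section
/- If k = 2·log₂ n + 2·log₂ log₂ n, then (n² · k · 2^{−k+1})^k → 0 as n → ∞; equivalently n^{2k} · k! · 2^{−k(k−1)} → 0 as n → ∞ (using k! ≤ k^k). -/
open Filter Real

theorem tendsto_union_bound_zero :
    Tendsto (fun n : ℕ =>
      ((n : ℝ) ^ 2 * (2 * logb 2 n + 2 * logb 2 (logb 2 n)) *
          (2 : ℝ) ^ (-(2 * logb 2 n + 2 * logb 2 (logb 2 n)) + 1)) ^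
        (2 * logb 2 n + 2 * logb 2 (logb 2 n)))
      atTop (nhds 0) := by
  have h2 : (0:ℝ) < 2 := two_pos
  apply tendsto_of_tendsto_of_tendsto_of_le_of_le'
    (g := fun _ : ℕ => (0:ℝ)) (h := fun n : ℕ => ((n:ℝ))⁻¹)
    tendsto_const_nhds
    (tendsto_inv_atTop_zero.comp tendsto_natCast_atTop_atTop)
  · -- lower bound
    filter_upwards [eventually_ge_atTop 16777216] with n hn
    have hx : (16777216:ℝ) ≤ (n:ℝ) := by exact_mod_cast hn
    have hx0 : (0:ℝ) < n := by linarith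
    set x := (n:ℝ)
    set L := logb 2 x with hLdef
    have hL : (24:ℝ) ≤ L := by
      have h1 : logb 2 (16777216:ℝ) ≤ L := by
        exact Real.logb_le_logb_of_le one_lt_two (by norm_num) hx
      have h2' : logb 2 (16777216:ℝ) = 24 := by
        rw [show (16777216:ℝ) = 2 ^ (24:ℕ) by norm_num, ← Real.rpow_natCast,
          Real.logb_rpow (by norm_num)]
        all_goals norm_num
      linarith
    have hL0 : (0:ℝ) < L := by linarith
    have hM0 : 0 ≤ logb 2 L := Real.logb_nonneg one_lt_two (by linarith)
    positivity
  · -- upper bound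
    filter_upwards [eventually_ge_atTop 16777216] with n hn
    have hx : (16777216:ℝ) ≤ (n:ℝ) := by exact_mod_cast hn
    have hx0 : (0:ℝ) < n := by linarith
    set x := (n:ℝ)
    set L := logb 2 x with hLdef
    have hL : (24:ℝ) ≤ L := by
      have h1 : logb 2 (16777216:ℝ) ≤ L := by
        exact Real.logb_le_logb_of_le one_lt_two (by norm_num) hx
      have h2' : logb 2 (16777216:ℝ) = 24 := by
        rw [show (16777216:ℝ) = 2 ^ (24:ℕ) by norm_num, ← Real.rpow_natCast,
          Real.logb_rpow (by norm_num)]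
        all_goals norm_num
      linarith
    have hL0 : (0:ℝ) < L := by linarith
    set M := logb 2 L with hMdef
    have hM0 : 0 ≤ M := Real.logb_nonneg one_lt_two (by linarith)
    have hM : M ≤ 2 * L := by
      have hlog : Real.log L ≤ L - 1 := Real.log_le_sub_one_of_pos hL0
      have hl2 : (0.6931471803:ℝ) < Real.log 2 := Real.log_two_gt_d9
      have : M = Real.log L / Real.log 2 := rfl
      rw [this, div_le_iff₀ (by linarith)]
      nlinarith
    set k := 2 * L + 2 * M with hkdef
    have hk0 : 0 < k := by positivity
    have hkL : L ≤ k := by linarith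
    have hk6 : k ≤ 6 * L := by linarith
    have h2L : (2:ℝ) ^ L = x := Real.rpow_logb h2 (by norm_num) hx0
    have h2M : (2:ℝ) ^ M = L := Real.rpow_logb h2 (by norm_num) hL0
    have hpow : (2:ℝ) ^ (-k + 1) = 2 / (x ^ 2 * L ^ 2) := by
      have e1 : (-k + 1 : ℝ) = 1 + L * (-2) + M * (-2) := by rw [hkdef]; ring
      rw [e1, Real.rpow_add h2, Real.rpow_add h2, Real.rpow_one,
        Real.rpow_mul (le_of_lt h2), Real.rpow_mul (le_of_lt h2), h2L, h2M,
        Real.rpow_neg (le_of_lt hx0), Real.rpow_neg (le_of_lt hL0),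
        show ((2:ℝ) = ((2:ℕ):ℝ)) by norm_num, Real.rpow_natCast, Real.rpow_natCast]
      field_simp
    have hbase : x ^ 2 * k * (2:ℝ) ^ (-k + 1) = 2 * k / L ^ 2 := by
      rw [hpow]
      field_simp
    have hbase_pos : (0:ℝ) < 2 * k / L ^ 2 := by positivity
    have hbase_le : 2 * k / L ^ 2 ≤ 1 / 2 := by
      rw [div_le_div_iff₀ (by positivity) h2]
      nlinarith
    calc (x ^ 2 * k * (2:ℝ) ^ (-k + 1)) ^ k
        = (2 * k / L ^ 2) ^ k := by rw [hbase]
      _ ≤ (1 / 2 : ℝ) ^ k :=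
          Real.rpow_le_rpow (le_of_lt hbase_pos) hbase_le (le_of_lt hk0)
      _ ≤ (1 / 2 : ℝ) ^ L :=
          Real.rpow_le_rpow_of_exponent_ge (by norm_num) (by norm_num) hkL
      _ = x⁻¹ := by
          rw [one_div, Real.inv_rpow (le_of_lt h2), h2L]
end
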